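/- arXiv:2310.12517 — 10 statements merged into one kernel-verified Lean document; each statement's English description precedes it below -/
import Mathlib

section
/- For integers m, r with 0 ≤ r ≤ m, define R_j = 2^j · j! · ∑_{k=0}^{r-j} C(r-k, j) · C(m, k) for 0 ≤ j ≤ r+1. Then (m-r)·C(m,r) - (m-2r)·R_0 = R_1. -/
open Finset

theorem stmt_0 (m r : ℕ) (hrm : r ≤ m)
    (R : ℕ → ℤ)
    (hR : ∀ j, R j = 2 ^ j * (Nat.factorial j) *
      ∑ k ∈ Finset.range (r - j + 1), (Nat.choose (r - k) j : ℤ) * Nat.choose m k) :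
    ((m : ℤ) - r) * Nat.choose m r - ((m : ℤ) - 2 * r) * R 0 = R 1 := by
  have key : ∀ s : ℕ, s ≤ m →
      ((m:ℤ) - s) * Nat.choose m s
        - ((m:ℤ) - 2*s) * (∑ k ∈ range (s+1), (Nat.choose m k : ℤ))
      = 2 * ∑ k ∈ range (s+1), ((s - k : ℕ) : ℤ) * Nat.choose m k := by
    intro s
    induction s with
    | zero => intro _; simp
    | succ n ih =>
      intro h
      have hn : n ≤ m := Nat.le_of_succ_le h
      have ihn := ih hn
      have hsum : ∑ k ∈ range (n+2), ((n+1 - k : ℕ) : ℤ) * Nat.choose m k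
          = (∑ k ∈ range (n+1), ((n - k : ℕ) : ℤ) * Nat.choose m k)
            + ∑ k ∈ range (n+1), (Nat.choose m k : ℤ) := by
        rw [Finset.sum_range_succ]
        simp only [Nat.sub_self, Nat.cast_zero, zero_mul, add_zero]
        rw [← Finset.sum_add_distrib]
        apply Finset.sum_congr rfl
        intro k hk
        have hk' : k ≤ n := by simpa [Nat.lt_succ_iff] using hk
        have h1 : (n+1-k : ℕ) = (n-k) + 1 := by omega
        rw [h1]; push_cast; ring
      have hchoose : ((n:ℤ)+1) * Nat.choose m (n+1) = ((m:ℤ) - n) * Nat.choose m n := by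
        have h0 := Nat.choose_succ_right_eq m n
        have hc : ((Nat.choose m (n+1) * (n+1) : ℕ) : ℤ)
            = ((Nat.choose m n * (m - n) : ℕ) : ℤ) := by exact_mod_cast congrArg (fun x : ℕ => (x : ℤ)) h0
        push_cast [Nat.cast_sub hn] at hc
        linarith
      have hS : ∑ k ∈ range (n+2), (Nat.choose m k : ℤ)
          = (∑ k ∈ range (n+1), (Nat.choose m k : ℤ)) + Nat.choose m (n+1) :=
        Finset.sum_range_succ _ _
      rw [hsum, hS]
      push_cast
      linarith
  have hkey := key r hrm
  have hR0 : R 0 = ∑ k ∈ range (r+1), (Nat.choose m k : ℤ) := by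
    rw [hR 0]
    simp [Nat.choose_zero_right]
  have hR1 : R 1 = 2 * ∑ k ∈ range (r+1), ((r - k : ℕ) : ℤ) * Nat.choose m k := by
    rw [hR 1]
    simp only [pow_one, Nat.factorial_one, Nat.cast_one, mul_one, Nat.choose_one_right]
    congr 1
    rcases Nat.eq_zero_or_pos r with h0 | hpos
    · subst h0; simp
    · have h1 : r - 1 + 1 = r := by omega
      rw [h1, Finset.sum_range_succ]
      simp
  rw [hR0, hR1]
  exact hkey
end

section
/- For integers m, r, j with 0 ≤ r ≤ m and 1 ≤ j ≤ r, define R_j = 2^j · j! · ∑_{k=0}^{r-j} C(r-k, j) · C(m, k), b_j = 2j(r+1-j), and a_j = m - 2r + 3j (as an integer, possibly negative). Then b_j · R_{j-1} - a_j · R_j = R_{j+1}, where R_{r+1} = 0. -/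
open Finset

lemma core (m b a : ℕ) (ham : b + 1 + a ≤ m) :
    ((a:ℤ)+1) * ∑ k ∈ range (a+2), ((b+1+a-k).choose b : ℤ) * m.choose k
    - ((m:ℤ) + (b+1) - 2*a) * ∑ k ∈ range (a+1), ((b+1+a-k).choose (b+1) : ℤ) * m.choose k
    = 2*((b:ℤ)+2) * ∑ k ∈ range (a+1), ((b+1+a-k).choose (b+2) : ℤ) * m.choose k := by
  have hsplit : ((a:ℤ)+1) * ∑ k ∈ range (a+2), ((b+1+a-k).choose b : ℤ) * m.choose k
      = (∑ k ∈ range (a+2), ((a:ℤ)+1-k) * ((b+1+a-k).choose b : ℤ) * m.choose k)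
      + ∑ k ∈ range (a+2), (k:ℤ) * ((b+1+a-k).choose b : ℤ) * m.choose k := by
    rw [mul_sum, ← sum_add_distrib]
    exact sum_congr rfl fun k _ => by ring
  have h1 : (∑ k ∈ range (a+2), ((a:ℤ)+1-k) * ((b+1+a-k).choose b : ℤ) * m.choose k)
      = ((b:ℤ)+1) * ∑ k ∈ range (a+1), ((b+1+a-k).choose (b+1) : ℤ) * m.choose k := by
    have step : (∑ k ∈ range (a+2), ((a:ℤ)+1-k) * ((b+1+a-k).choose b : ℤ) * m.choose k)
        = ∑ k ∈ range (a+2), ((b:ℤ)+1) * (((b+1+a-k).choose (b+1) : ℤ) * m.choose k) := by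
      refine sum_congr rfl fun k hk => ?_
      have hk' : k ≤ a + 1 := by simpa [Nat.lt_succ_iff] using mem_range.mp hk
      have hnat : (b+1+a-k).choose (b+1) * (b+1) = (b+1+a-k).choose b * (a+1-k) := by
        rw [Nat.choose_succ_right_eq]; congr 1; omega
      have hz := congrArg (Nat.cast : ℕ → ℤ) hnat
      push_cast at hz
      have hsub : ((a+1-k : ℕ):ℤ) = (a:ℤ)+1-(k:ℤ) := by omega
      rw [hsub] at hz
      linear_combination (-(m.choose k : ℤ)) * hz
    rw [step, ← mul_sum, sum_range_succ]
    have : ((b+1+a-(a+1)).choose (b+1) : ℤ) = 0 := by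
      norm_cast
      exact Nat.choose_eq_zero_of_lt (by omega)
    rw [this]; ring
  have h2 : (∑ k ∈ range (a+2), (k:ℤ) * ((b+1+a-k).choose b : ℤ) * m.choose k)
      = ∑ k ∈ range (a+1), ((m:ℤ)-k) * ((b+a-k).choose b : ℤ) * m.choose k := by
    rw [sum_range_succ']
    simp only [Nat.cast_zero, zero_mul, add_zero]
    refine sum_congr rfl fun k hk => ?_
    have hk' : k ≤ a := by simpa [Nat.lt_succ_iff] using mem_range.mp hk
    have hi : b+1+a-(k+1) = b+a-k := by omega
    have hnat : m.choose (k+1) * (k+1) = m.choose k * (m-k) := Nat.choose_succ_right_eq m k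
    have hz := congrArg (Nat.cast : ℕ → ℤ) hnat
    push_cast at hz
    have hsub : ((m-k : ℕ):ℤ) = (m:ℤ)-(k:ℤ) := by omega
    rw [hsub] at hz
    rw [hi]
    push_cast
    linear_combination (((b+a-k).choose b : ℤ)) * hz
  have h3 : (∑ k ∈ range (a+1), ((m:ℤ)-k) * ((b+a-k).choose b : ℤ) * m.choose k)
      = (∑ k ∈ range (a+1), ((m:ℤ)-k) * (((b+1+a-k).choose (b+1) : ℤ) * m.choose k))
      - ∑ k ∈ range (a+1), ((m:ℤ)-k) * ((b+a-k).choose (b+1) : ℤ) * m.choose k := by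
    rw [← sum_sub_distrib]
    refine sum_congr rfl fun k hk => ?_
    have hk' : k ≤ a := by simpa [Nat.lt_succ_iff] using mem_range.mp hk
    have hp : (b+1+a-k).choose (b+1) = (b+a-k).choose b + (b+a-k).choose (b+1) := by
      have : b+1+a-k = (b+a-k)+1 := by omega
      rw [this, Nat.choose_succ_succ]
    rw [hp]; push_cast; ring
  have h4 : (∑ k ∈ range (a+1), (k:ℤ) * (((b+1+a-k).choose (b+1) : ℤ) * m.choose k))
      = ∑ k ∈ range (a+1), ((m:ℤ)-k) * ((b+a-k).choose (b+1) : ℤ) * m.choose k := by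
    rw [sum_range_succ', sum_range_succ]
    simp only [Nat.cast_zero, zero_mul, add_zero]
    have hlast : ((b+a-a).choose (b+1) : ℤ) = 0 := by
      norm_cast; exact Nat.choose_eq_zero_of_lt (by omega)
    rw [hlast]
    rw [mul_zero, zero_mul, add_zero]
    refine sum_congr rfl fun k hk => ?_
    have hk' : k < a := mem_range.mp hk
    have hi : b+1+a-(k+1) = b+a-k := by omega
    have hnat : m.choose (k+1) * (k+1) = m.choose k * (m-k) := Nat.choose_succ_right_eq m k
    have hz := congrArg (Nat.cast : ℕ → ℤ) hnat
    push_cast at hz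
    have hsub : ((m-k : ℕ):ℤ) = (m:ℤ)-(k:ℤ) := by omega
    rw [hsub] at hz
    rw [hi]
    push_cast
    linear_combination (((b+a-k).choose (b+1) : ℤ)) * hz
  have h5 : 2*((b:ℤ)+2) * (∑ k ∈ range (a+1), ((b+1+a-k).choose (b+2) : ℤ) * m.choose k)
      = ∑ k ∈ range (a+1), 2*((a:ℤ)-k) * (((b+1+a-k).choose (b+1) : ℤ) * m.choose k) := by
    rw [mul_sum]
    refine sum_congr rfl fun k hk => ?_
    have hk' : k ≤ a := by simpa [Nat.lt_succ_iff] using mem_range.mp hk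
    have hnat : (b+1+a-k).choose (b+2) * (b+2) = (b+1+a-k).choose (b+1) * (a-k) := by
      rw [Nat.choose_succ_right_eq]; congr 1; omega
    have hz := congrArg (Nat.cast : ℕ → ℤ) hnat
    push_cast at hz
    have hsub : ((a-k : ℕ):ℤ) = (a:ℤ)-(k:ℤ) := by omega
    rw [hsub] at hz
    linear_combination (2 * (m.choose k : ℤ)) * hz
  have hfin : ((b:ℤ)+1) * (∑ k ∈ range (a+1), ((b+1+a-k).choose (b+1) : ℤ) * m.choose k)
      + (∑ k ∈ range (a+1), ((m:ℤ)-k) * (((b+1+a-k).choose (b+1) : ℤ) * m.choose k))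
      - (∑ k ∈ range (a+1), (k:ℤ) * (((b+1+a-k).choose (b+1) : ℤ) * m.choose k))
      - ((m:ℤ) + (b+1) - 2*a) * (∑ k ∈ range (a+1), ((b+1+a-k).choose (b+1) : ℤ) * m.choose k)
      = ∑ k ∈ range (a+1), 2*((a:ℤ)-k) * (((b+1+a-k).choose (b+1) : ℤ) * m.choose k) := by
    rw [mul_sum, mul_sum, ← sum_add_distrib, ← sum_sub_distrib, ← sum_sub_distrib]
    exact sum_congr rfl fun k _ => by ring
  linear_combination hsplit + h1 + h2 + h3 + h4 + hfin - h5

theorem stmt_1 (m r j : ℕ) (hrm : r ≤ m) (hj1 : 1 ≤ j) (hjr : j ≤ r)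
    (R : ℕ → ℤ)
    (hR : ∀ i, R i = 2 ^ i * (Nat.factorial i) *
      ∑ k ∈ Finset.range (r - i + 1), (Nat.choose (r - k) i : ℤ) * Nat.choose m k) :
    (2 * j * (r + 1 - j) : ℤ) * R (j - 1) - ((m : ℤ) - 2 * r + 3 * j) * R j = R (j + 1) := by
  obtain ⟨b, rfl⟩ : ∃ b, j = b + 1 := ⟨j - 1, by omega⟩
  obtain ⟨a, rfl⟩ : ∃ a, r = b + 1 + a := ⟨r - (b + 1), by omega⟩
  have ham : b + 1 + a ≤ m := hrm
  rw [hR, hR, hR]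
  simp only [Nat.add_sub_cancel]
  have e1 : b + 1 + a - b + 1 = a + 2 := by omega
  have e2 : b + 1 + a - (b + 1) + 1 = a + 1 := by omega
  have e4 : b + 1 + 1 = b + 2 := rfl
  rw [e1, e2, e4]
  have e3 : (∑ k ∈ range (b + 1 + a - (b + 2) + 1), ((b+1+a-k).choose (b+2) : ℤ) * m.choose k)
      = ∑ k ∈ range (a+1), ((b+1+a-k).choose (b+2) : ℤ) * m.choose k := by
    apply sum_subset
    · intro x hx
      simp only [mem_range] at *
      omega
    · intro x hx hnx
      simp only [mem_range] at hx hnx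
      have hz : (b+1+a-x).choose (b+2) = 0 := Nat.choose_eq_zero_of_lt (by omega)
      rw [hz]
      push_cast
      ring
  rw [e3]
  simp only [Nat.factorial_succ]
  push_cast
  linear_combination (2 * (2:ℤ)^b * ((b:ℤ)+1) * (b.factorial : ℤ)) * core m b a ham
end

section
/- For integers m, r with 0 ≤ r ≤ m, we have (m - 2r) · s_m(r) ≤ (r+1) · C(m, r+1), where s_m(r) = ∑_{i=0}^{r} C(m,i), with equality if and only if r = 0 or m - 2r is sufficiently negative; in particular the inequality (m-2r)·s_m(r) ≤ (r+1)·C(m,r+1) holds for all 0 ≤ r ≤ m, and is strict for 1 ≤ r < (m+3)/2. -/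
lemma key_identity (m : ℕ) : ∀ r : ℕ, r ≤ m →
    ((r : ℤ) + 1) * Nat.choose m (r + 1)
      = ∑ i ∈ Finset.range (r + 1), ((m : ℤ) - 2 * i) * Nat.choose m i := by
  intro r
  induction r with
  | zero => simp
  | succ n ih =>
    intro h
    have hn : n ≤ m := Nat.le_of_succ_le h
    rw [Finset.sum_range_succ, ← ih hn]
    have hc : Nat.choose m (n + 2) * (n + 2) = Nat.choose m (n + 1) * (m - (n + 1)) :=
      Nat.choose_succ_right_eq m (n + 1)
    have hc' : (Nat.choose m (n + 2) : ℤ) * (n + 2) = Nat.choose m (n + 1) * ((m : ℤ) - (n + 1)) := by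
      have := congrArg (Nat.cast : ℕ → ℤ) hc
      push_cast [Nat.cast_sub h] at this
      linarith [this]
    push_cast
    nlinarith [hc']

theorem stmt_4 (m r : ℕ) (hrm : r ≤ m) :
    ((m : ℤ) - 2 * r) * ∑ i ∈ Finset.range (r + 1), (Nat.choose m i : ℤ)
      ≤ (r + 1 : ℤ) * Nat.choose m (r + 1) ∧
    (1 ≤ r → 2 * r < m + 3 →
      ((m : ℤ) - 2 * r) * ∑ i ∈ Finset.range (r + 1), (Nat.choose m i : ℤ)
        < (r + 1 : ℤ) * Nat.choose m (r + 1)) := by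
  rw [key_identity m r hrm, Finset.mul_sum]
  constructor
  · apply Finset.sum_le_sum
    intro i hi
    have hi' : i ≤ r := Nat.lt_succ_iff.mp (Finset.mem_range.mp hi)
    have : (i : ℤ) ≤ r := by exact_mod_cast hi'
    have hch : (0 : ℤ) ≤ Nat.choose m i := by positivity
    nlinarith
  · intro hr _
    apply Finset.sum_lt_sum
    · intro i hi
      have hi' : i ≤ r := Nat.lt_succ_iff.mp (Finset.mem_range.mp hi)
      have : (i : ℤ) ≤ r := by exact_mod_cast hi'
      have hch : (0 : ℤ) ≤ Nat.choose m i := by positivity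
      nlinarith
    · refine ⟨0, Finset.mem_range.mpr (Nat.succ_pos r), ?_⟩
      have hr' : (1 : ℤ) ≤ r := by exact_mod_cast hr
      simp only [Nat.choose_zero_right, Nat.cast_one, mul_one, Nat.cast_zero]
      linarith
end

section
/- For integers m, r with 1 < r < (m+3)/2, the strict inequality (r+1) · C(m, r+1) · (m - 2r + 3) < (m - 2r) · (m - 2r + 3) · s_m(r) + 2r · s_m(r) holds; i.e., (r+1)·C(m,r+1)/s_m(r) < (m-2r) + 2r/(m-2r+3). -/
def Saux (m r : ℕ) : ℤ := ∑ i ∈ Finset.range (r + 1), (Nat.choose m i : ℤ)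

lemma Saux_one_le (m r : ℕ) : 1 ≤ Saux m r := by
  have : ((Nat.choose m 0 : ℤ)) ≤ Saux m r :=
    Finset.single_le_sum (f := fun i => (Nat.choose m i : ℤ))
      (fun i _ => by positivity) (by simp)
  simpa using this

lemma Saux_succ (m r : ℕ) : Saux m (r + 1) = Saux m r + (Nat.choose m (r + 1) : ℤ) :=
  Finset.sum_range_succ _ _

lemma Saux_pascal (m r : ℕ) : Saux (m + 1) (r + 1) = Saux m (r + 1) + Saux m r := by
  induction r with
  | zero =>
      simp [Saux, Finset.sum_range_succ]
      ring
  | succ n ih =>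
      rw [Saux_succ (m+1) (n+1), ih, Saux_succ m (n+1), Saux_succ m n,
        Nat.choose_succ_succ]
      push_cast
      ring

lemma choose_id (m r : ℕ) : ((r : ℤ) + 1) * (Nat.choose m (r + 1) : ℤ)
    = ((m : ℤ) - r) * (Nat.choose m r : ℤ) := by
  rcases le_or_gt r m with h | h
  · have h1 := Nat.choose_succ_right_eq m r
    have h2 : ((m - r : ℕ) : ℤ) = (m : ℤ) - r := by
      push_cast [h]; ring
    have h3 : (Nat.choose m (r+1) : ℤ) * ((r:ℤ)+1)
        = (Nat.choose m r : ℤ) * (((m - r : ℕ) : ℤ)) := by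
      exact_mod_cast h1
    rw [h2] at h3
    linarith [h3]
  · rw [Nat.choose_eq_zero_of_lt h, Nat.choose_eq_zero_of_lt (h.trans (Nat.lt_succ_self r))]
    ring

lemma key : ∀ m r : ℕ, 2 ≤ r → 2 * r ≤ m + 2 →
    ((m : ℤ) - r) * ((m : ℤ) - 2 * r + 3) * (Nat.choose m r : ℤ)
      < (((m : ℤ) - 2 * r) * ((m : ℤ) - 2 * r + 3) + 2 * r) * Saux m r := by
  intro m
  induction m using Nat.strong_induction_on with
  | _ m IH =>
    intro r hr hm
    rcases eq_or_lt_of_le hr with h2 | h3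
    · -- r = 2
      subst h2
      have hm2 : 2 ≤ m := by omega
      have hC1 : (Nat.choose m 1 : ℤ) = m := by simp
      have hC2 : (2 : ℤ) * (Nat.choose m 2 : ℤ) = (m : ℤ) * ((m : ℤ) - 1) := by
        have h := choose_id m 1
        push_cast at h
        rw [hC1] at h
        linarith
      have hSeq : Saux m 2 = 1 + (m : ℤ) + (Nat.choose m 2 : ℤ) := by
        simp [Saux, Finset.sum_range_succ]
      have hfin : (((m:ℤ) - 2*2) * ((m:ℤ) - 2*2 + 3) + 2*2) * (1 + (m:ℤ) + (Nat.choose m 2 : ℤ))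
          - ((m:ℤ) - 2) * ((m:ℤ) - 2*2 + 3) * (Nat.choose m 2 : ℤ) = 8 := by
        linear_combination ((3:ℤ) - (m:ℤ)) * hC2
      rw [hSeq]
      push_cast
      linarith [hfin]
    · -- r ≥ 3
      obtain ⟨R, rfl⟩ : ∃ R, r = R + 3 := ⟨r - 3, by omega⟩
      rcases lt_or_ge m (2 * (R + 3)) with hms | hml
      · -- base cases m = 2r-2 or m = 2r-1
        have hsplit : Saux m (R+3) = Saux m (R+2) + (Nat.choose m (R+3) : ℤ) :=
          Saux_succ m (R+2)
        have ht : 1 ≤ Saux m (R+2) := Saux_one_le m (R+2)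
        have hCn : (0:ℤ) ≤ (Nat.choose m (R+3) : ℤ) := by positivity
        have hR : (0:ℤ) ≤ (R:ℤ) := by positivity
        have hcase : m = 2*R + 4 ∨ m = 2*R + 5 := by omega
        rcases hcase with rfl | rfl <;>
          (rw [hsplit]; push_cast;
           nlinarith [ht, hCn, hR, mul_nonneg hR hCn, mul_nonneg hR (sub_nonneg.mpr ht)])
      · -- recurrence step
        obtain ⟨M, rfl⟩ : ∃ M, m = M + 1 := ⟨m - 1, by omega⟩
        have h1 := IH M (Nat.lt_succ_self M) (R+3) (by omega) (by omega)
        have h2 := IH M (Nat.lt_succ_self M) (R+2) (by omega) (by omega)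
        have hS := Saux_pascal M (R+2)
        have hC : (Nat.choose (M+1) (R+3) : ℤ)
            = (Nat.choose M (R+2) : ℤ) + (Nat.choose M (R+3) : ℤ) := by
          rw [Nat.choose_succ_succ]; push_cast; ring
        have hSC := Saux_succ M (R+2)
        have hid := choose_id M (R+2)
        have hkey :
            (((M:ℤ)+1 - 2*(R+3)) * ((M:ℤ)+1 - 2*(R+3) + 3) + 2*(R+3)) * Saux (M+1) (R+3)
              - ((M:ℤ)+1 - (R+3)) * ((M:ℤ)+1 - 2*(R+3) + 3) * (Nat.choose (M+1) (R+3) : ℤ)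
            = ((((M:ℤ) - 2*(R+3)) * ((M:ℤ) - 2*(R+3) + 3) + 2*(R+3)) * Saux M (R+3)
                - ((M:ℤ) - (R+3)) * ((M:ℤ) - 2*(R+3) + 3) * (Nat.choose M (R+3) : ℤ))
              + ((((M:ℤ) - 2*(R+2)) * ((M:ℤ) - 2*(R+2) + 3) + 2*(R+2)) * Saux M (R+2)
                - ((M:ℤ) - (R+2)) * ((M:ℤ) - 2*(R+2) + 3) * (Nat.choose M (R+2) : ℤ)) := by
          push_cast at hS hC hSC hid
          linear_combination
            (((M:ℤ) - 2*R - 5)^2 + 3*((M:ℤ) - 2*R - 5) + 2*((R:ℤ)+3)) * hS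
            - ((M:ℤ)+1 - (R+3)) * (((M:ℤ) - 2*R - 5) + 3) * hC
            + (2*((M:ℤ) - 2*R - 5) + 2) * hSC
            - hid
        push_cast at hkey h1 h2 ⊢
        linarith [h1, h2, hkey]

theorem stmt_5 (m r : ℕ) (hr : 1 < r) (hrm : 2 * r < m + 3) :
    (r + 1 : ℤ) * Nat.choose m (r + 1) * ((m : ℤ) - 2 * r + 3)
      < ((m : ℤ) - 2 * r) * ((m : ℤ) - 2 * r + 3) *
          (∑ i ∈ Finset.range (r + 1), (Nat.choose m i : ℤ))
        + 2 * r * ∑ i ∈ Finset.range (r + 1), (Nat.choose m i : ℤ) := by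
  have hk := key m r (by omega) (by omega)
  have hc := choose_id m r
  have hS : Saux m r = ∑ i ∈ Finset.range (r + 1), (Nat.choose m i : ℤ) := rfl
  rw [hS] at hk
  nlinarith [hk, hc]
end

section
/- For an integer m ≥ 0 and integer r with 0 ≤ r ≤ m, define t_m(r) = s_m(r+1)/s_m(r) where s_m(r) = ∑_{i=0}^{r} C(m,i) and s_m(m+1) = 2^m. Then t_m is strictly decreasing: t_m(r-1) > t_m(r) for 1 ≤ r ≤ m, and moreover t_m(r) > (m-r)/(r+1) for 0 ≤ r ≤ m. -/
lemma key_nat (m r i : ℕ) (hir : i ≤ r) (hrm : r ≤ m) :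
    (m - r) * Nat.choose m i ≤ (r + 1) * Nat.choose m (i + 1) := by
  have h := Nat.choose_succ_right_eq m i
  have h2 : (m - r) * (i + 1) ≤ (r + 1) * (m - i) := by
    have h3 : m - r ≤ m - i := Nat.sub_le_sub_left hir m
    have h4 : i + 1 ≤ r + 1 := by omega
    calc (m - r) * (i + 1) ≤ (m - i) * (r + 1) := Nat.mul_le_mul h3 h4
      _ = (r + 1) * (m - i) := mul_comm _ _
  have : (m - r) * Nat.choose m i * (i + 1) ≤ (r + 1) * Nat.choose m (i + 1) * (i + 1) := by
    calc (m - r) * Nat.choose m i * (i + 1) = (m - r) * (i+1) * Nat.choose m i := by ring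
      _ ≤ (r + 1) * (m - i) * Nat.choose m i := Nat.mul_le_mul_right _ h2
      _ = (r + 1) * (Nat.choose m i * (m - i)) := by ring
      _ = (r + 1) * (Nat.choose m (i+1) * (i+1)) := by rw [h]
      _ = (r + 1) * Nat.choose m (i + 1) * (i + 1) := by ring
  exact Nat.le_of_mul_le_mul_right this (by omega)

theorem stmt_6 (m r : ℕ) (hrm : r ≤ m)
    (s : ℕ → ℚ) (hs : ∀ k, s k = ∑ i ∈ Finset.range (k + 1), (Nat.choose m i : ℚ))
    (t : ℕ → ℚ) (ht : ∀ k, t k = s (k + 1) / s k) :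
    (1 ≤ r → t (r - 1) > t r) ∧ t r > ((m : ℚ) - r) / (r + 1) := by
  -- positivity of s
  have hspos : ∀ k, 0 < s k := by
    intro k
    rw [hs]
    apply Finset.sum_pos' (fun i _ => by positivity)
    exact ⟨0, Finset.mem_range.mpr (by omega), by simp⟩
  -- key in ℚ
  have keyQ : ∀ i ≤ r, ((m - r : ℕ) : ℚ) * Nat.choose m i ≤ (r + 1 : ℚ) * Nat.choose m (i + 1) := by
    intro i hi
    have := key_nat m r i hi hrm
    exact_mod_cast this
  have hmrcast : ((m - r : ℕ) : ℚ) = (m : ℚ) - r := by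
    exact Nat.cast_sub hrm
  -- B : (m-r) * s r < (r+1) * s (r+1)
  have hB : ((m : ℚ) - r) * s r < ((r : ℚ) + 1) * s (r + 1) := by
    rw [hs, hs, ← hmrcast, Finset.mul_sum, Finset.mul_sum]
    rw [Finset.sum_range_succ' (fun i => ((r : ℚ) + 1) * Nat.choose m i) (r + 1)]
    have hle : ∑ i ∈ Finset.range (r + 1), ((m - r : ℕ) : ℚ) * Nat.choose m i
        ≤ ∑ i ∈ Finset.range (r + 1), ((r : ℚ) + 1) * Nat.choose m (i + 1) := by
      apply Finset.sum_le_sum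
      intro i hi
      exact keyQ i (by simpa using Nat.lt_succ_iff.mp (Finset.mem_range.mp hi))
    have hpos : (0 : ℚ) < ((r : ℚ) + 1) * Nat.choose m 0 := by simp; positivity
    calc ∑ i ∈ Finset.range (r + 1), ((m - r : ℕ) : ℚ) * Nat.choose m i
        ≤ ∑ i ∈ Finset.range (r + 1), ((r : ℚ) + 1) * Nat.choose m (i + 1) := hle
      _ < _ := by linarith
  constructor
  · intro hr1
    rw [ht, ht, gt_iff_lt]
    have hr : r - 1 + 1 = r := by omega
    rw [hr]
    rw [div_lt_div_iff₀ (hspos r) (hspos (r - 1))]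
    -- need s(r+1) * s(r-1) < s r * s r
    have hsr : s r = s (r - 1) + Nat.choose m r := by
      rw [hs, hs]
      conv_lhs => rw [← hr]
      rw [Finset.sum_range_succ, hr]
    have hsr1 : s (r + 1) = s r + Nat.choose m (r + 1) := by
      rw [hs, hs, Finset.sum_range_succ]
    -- main: choose m (r+1) * s (r-1) ≤ choose m r * s (r-1+1=r) minus... prove
    -- c(r+1) * s(r-1) < c r * s r
    have hmain : (Nat.choose m (r + 1) : ℚ) * s (r - 1) < (Nat.choose m r : ℚ) * s r := by
      -- multiply key by c r / cancel
      have crpos : (0 : ℚ) < Nat.choose m r := by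
        exact_mod_cast Nat.choose_pos hrm
      have hrel : ((r : ℚ) + 1) * Nat.choose m (r + 1) = ((m - r : ℕ) : ℚ) * Nat.choose m r := by
        have h := Nat.choose_succ_right_eq m r
        have h2 : ((Nat.choose m (r + 1) : ℚ)) * ((r : ℚ) + 1)
            = (Nat.choose m r : ℚ) * ((m - r : ℕ) : ℚ) := by exact_mod_cast h
        linarith
      have term : ∀ i ≤ r - 1, (Nat.choose m (r + 1) : ℚ) * Nat.choose m i
          ≤ (Nat.choose m r : ℚ) * Nat.choose m (i + 1) := by
        intro i hi
        have hk := keyQ i (by omega)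
        have : ((r : ℚ) + 1) * ((Nat.choose m (r + 1) : ℚ) * Nat.choose m i)
            ≤ ((r : ℚ) + 1) * ((Nat.choose m r : ℚ) * Nat.choose m (i + 1)) := by
          calc ((r : ℚ) + 1) * ((Nat.choose m (r + 1) : ℚ) * Nat.choose m i)
              = (((r : ℚ) + 1) * Nat.choose m (r + 1)) * Nat.choose m i := by ring
            _ = ((m - r : ℕ) : ℚ) * Nat.choose m r * Nat.choose m i := by rw [hrel]
            _ = (Nat.choose m r : ℚ) * (((m - r : ℕ) : ℚ) * Nat.choose m i) := by ring
            _ ≤ (Nat.choose m r : ℚ) * (((r : ℚ) + 1) * Nat.choose m (i + 1)) := by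
                exact mul_le_mul_of_nonneg_left hk (le_of_lt crpos)
            _ = ((r : ℚ) + 1) * ((Nat.choose m r : ℚ) * Nat.choose m (i + 1)) := by ring
        have hr1pos : (0 : ℚ) < (r : ℚ) + 1 := by positivity
        exact le_of_mul_le_mul_left this hr1pos
      rw [hs, hs, Finset.mul_sum, Finset.mul_sum]
      have heq : r - 1 + 1 = r := hr
      conv_rhs => rw [show r + 1 = r - 1 + 1 + 1 from by omega]
      rw [Finset.sum_range_succ' (fun i => (Nat.choose m r : ℚ) * Nat.choose m i) (r - 1 + 1)]
      have hle2 : ∑ i ∈ Finset.range (r - 1 + 1), (Nat.choose m (r + 1) : ℚ) * Nat.choose m i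
          ≤ ∑ i ∈ Finset.range (r - 1 + 1), (Nat.choose m r : ℚ) * Nat.choose m (i + 1) := by
        apply Finset.sum_le_sum
        intro i hi
        exact term i (Nat.lt_succ_iff.mp (Finset.mem_range.mp hi))
      have hc0 : (0 : ℚ) < (Nat.choose m r : ℚ) * Nat.choose m 0 := by simpa using crpos
      linarith
    nlinarith [hspos r, hspos (r - 1), hsr, hsr1, hmain]
  · rw [ht, gt_iff_lt, div_lt_div_iff₀ (by positivity : (0:ℚ) < (r:ℚ)+1) (hspos r)]
    linarith [hB]
end

section
/- Let ω > 1 be a real number and m ≥ 0 an integer. Define g(r) = ω^{-r} · ∑_{i=0}^{r} C(m,i) for 0 ≤ r ≤ m. Then g is unimodal: there exists r_0 ∈ {0,...,m} such that g(0) < g(1) < ... < g(r_0 - 1) ≤ g(r_0) and g(r_0) > g(r_0 + 1) > ... > g(m). -/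
private lemma aux_term (m r i : ℕ) (h : i ≤ r + 1) :
    m.choose (r+2) * m.choose i ≤ m.choose (r+1) * m.choose (i+1) := by
  rcases Nat.lt_or_ge m (r+2) with hm | hm
  · simp [Nat.choose_eq_zero_of_lt hm]
  · have h1 : m.choose (r+2) * (r+2) = m.choose (r+1) * (m - (r+1)) :=
      Nat.choose_succ_right_eq m (r+1)
    have h2 : m.choose (i+1) * (i+1) = m.choose i * (m - i) :=
      Nat.choose_succ_right_eq m i
    have key2 : (m - (r+1)) * (i+1) ≤ (m - i) * (r+2) :=
      Nat.mul_le_mul (by omega) (by omega)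
    have hmid : m.choose (r+1) * m.choose i * ((m - (r+1)) * (i+1))
        ≤ m.choose (r+1) * m.choose i * ((m - i) * (r+2)) :=
      Nat.mul_le_mul le_rfl key2
    apply Nat.le_of_mul_le_mul_right _ (show 0 < (r+2)*(i+1) by positivity)
    calc m.choose (r+2) * m.choose i * ((r+2)*(i+1))
        = (m.choose (r+2) * (r+2)) * (m.choose i * (i+1)) := by ring
      _ = (m.choose (r+1) * (m - (r+1))) * (m.choose i * (i+1)) := by rw [h1]
      _ = m.choose (r+1) * m.choose i * ((m - (r+1)) * (i+1)) := by ring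
      _ ≤ m.choose (r+1) * m.choose i * ((m - i) * (r+2)) := hmid
      _ = (m.choose (i+1) * (i+1)) * (m.choose (r+1) * (r+2)) := by rw [h2]; ring
      _ = m.choose (r+1) * m.choose (i+1) * ((r+2)*(i+1)) := by ring

private lemma aux_sum (m r : ℕ) :
    m.choose (r+2) * (∑ i ∈ Finset.range (r+1), m.choose i) + m.choose (r+1)
      ≤ m.choose (r+1) * (∑ i ∈ Finset.range (r+2), m.choose i) := by
  rw [Finset.sum_range_succ' (fun i => m.choose i) (r+1), Nat.choose_zero_right,
    Nat.mul_add, mul_one, Finset.mul_sum, Finset.mul_sum]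
  apply Nat.add_le_add_right
  apply Finset.sum_le_sum
  intro i hi
  exact aux_term m r i (by have := Finset.mem_range.mp hi; omega)

theorem stmt_7 (ω : ℝ) (hω : 1 < ω) (m : ℕ)
    (g : ℕ → ℝ)
    (hg : ∀ r, g r = (ω ^ r)⁻¹ * ∑ i ∈ Finset.range (r + 1), (Nat.choose m i : ℝ)) :
    ∃ r₀ ≤ m,
      (∀ r, r + 2 ≤ r₀ → g r < g (r + 1)) ∧
      (1 ≤ r₀ → g (r₀ - 1) ≤ g r₀) ∧
      (∀ r, r₀ ≤ r → r < m → g r > g (r + 1)) := by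
  classical
  have hω0 : (0:ℝ) < ω := lt_trans one_pos hω
  set Sn : ℕ → ℕ := fun r => ∑ i ∈ Finset.range (r+1), m.choose i with hSn
  have hSpos : ∀ r, 0 < Sn r := by
    intro r
    have h0 : m.choose 0 ≤ Sn r :=
      Finset.single_le_sum (f := fun i => m.choose i) (fun i _ => Nat.zero_le _)
        (Finset.mem_range.mpr (by omega))
    simp only [Nat.choose_zero_right] at h0
    omega
  have hScast : ∀ r, (0:ℝ) < (Sn r : ℝ) := fun r => by exact_mod_cast hSpos r
  have hstep : ∀ r, (Sn (r+1) : ℝ) = Sn r + m.choose (r+1) := by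
    intro r
    rw [hSn]
    push_cast [Finset.sum_range_succ]
    ring
  have hg' : ∀ r, g r = (ω ^ r)⁻¹ * (Sn r : ℝ) := by
    intro r
    rw [hg, hSn]
    push_cast
    ring
  have hmul : ∀ r, ω ^ (r+1) * g r = ω * Sn r := by
    intro r
    rw [hg', pow_succ]
    have hne : (ω^r) ≠ 0 := ne_of_gt (pow_pos hω0 r)
    field_simp
  have hmul' : ∀ r, ω ^ (r+1) * g (r+1) = Sn (r+1) := by
    intro r
    rw [hg']
    have hne : (ω^(r+1)) ≠ 0 := ne_of_gt (pow_pos hω0 _)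
    field_simp
  have hlt : ∀ r, (g r < g (r+1)) ↔ (ω - 1) * Sn r < m.choose (r+1) := by
    intro r
    rw [← mul_lt_mul_iff_right₀ (pow_pos hω0 (r+1)), hmul, hmul', hstep]
    constructor <;> intro h <;> linarith
  have hle : ∀ r, (g r ≤ g (r+1)) ↔ (ω - 1) * Sn r ≤ m.choose (r+1) := by
    intro r
    rw [← mul_le_mul_iff_right₀ (pow_pos hω0 (r+1)), hmul, hmul', hstep]
    constructor <;> intro h <;> linarith
  set P : ℕ → Prop := fun r => (m.choose (r+1) : ℝ) < (ω - 1) * Sn r with hP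
  have hPm : P m := by
    rw [hP]
    simp only [Nat.choose_eq_zero_of_lt (Nat.lt_succ_self m), Nat.cast_zero]
    exact mul_pos (by linarith) (hScast m)
  have hex : ∃ r, P r := ⟨m, hPm⟩
  have hr₀m : Nat.find hex ≤ m := Nat.find_min' hex hPm
  -- the step lemma: P propagates upward while index + 1 ≤ m
  have hstepP : ∀ s, s + 1 ≤ m → P s → P (s+1) := by
    intro s hs hPs
    rw [hP] at hPs ⊢
    have hnat : m.choose (s+2) * Sn s + m.choose (s+1) ≤ m.choose (s+1) * Sn (s+1) :=
      aux_sum m s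
    have hR : (m.choose (s+2) : ℝ) * Sn s + m.choose (s+1) ≤ m.choose (s+1) * Sn (s+1) := by
      exact_mod_cast hnat
    have hc : (1:ℝ) ≤ m.choose (s+1) := by exact_mod_cast Nat.choose_pos hs
    have h1 : (m.choose (s+1) : ℝ) * Sn (s+1) < (ω - 1) * Sn s * Sn (s+1) :=
      mul_lt_mul_of_pos_right hPs (hScast (s+1))
    have h2 : (m.choose (s+2) : ℝ) * Sn s < (ω - 1) * Sn (s+1) * Sn s := by nlinarith
    exact lt_of_mul_lt_mul_right (by nlinarith) (le_of_lt (hScast s))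
  refine ⟨Nat.find hex, hr₀m, ?_, ?_, ?_⟩
  · -- strictly increasing before r₀ - 1
    intro r hr
    have hnp : ¬ P (r+1) := Nat.find_min hex (by omega)
    rw [hP] at hnp
    have h1' : (ω - 1) * Sn (r+1) ≤ m.choose (r+2) := not_lt.mp hnp
    have hm1 : r + 1 ≤ m := by omega
    have hc : (1:ℝ) ≤ m.choose (r+1) := by exact_mod_cast Nat.choose_pos hm1
    have hnat : m.choose (r+2) * Sn r + m.choose (r+1) ≤ m.choose (r+1) * Sn (r+1) :=
      aux_sum m r
    have hR : (m.choose (r+2) : ℝ) * Sn r + m.choose (r+1) ≤ m.choose (r+1) * Sn (r+1) := by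
      exact_mod_cast hnat
    rw [hlt r]
    have h3 : (ω - 1) * Sn (r+1) * Sn r ≤ (m.choose (r+2) : ℝ) * Sn r :=
      mul_le_mul_of_nonneg_right h1' (le_of_lt (hScast r))
    have h4 : (ω - 1) * Sn r * Sn (r+1) < (m.choose (r+1) : ℝ) * Sn (r+1) := by nlinarith
    exact lt_of_mul_lt_mul_right (by nlinarith) (le_of_lt (hScast (r+1)))
  · -- possible tie at the top
    intro h1r₀
    have hnp : ¬ P (Nat.find hex - 1) := Nat.find_min hex (by omega)
    have hnp' : (ω - 1) * (Sn (Nat.find hex - 1) : ℝ) ≤ (m.choose (Nat.find hex - 1 + 1) : ℝ) :=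
      not_lt.mp hnp
    have h2 := (hle (Nat.find hex - 1)).mpr hnp'
    rwa [Nat.sub_add_cancel h1r₀] at h2
  · -- strictly decreasing after r₀
    intro r hr₀r hrm
    have hPr : P r := by
      have hall : ∀ s, Nat.find hex ≤ s → s < m → P s := by
        intro s
        induction s with
        | zero =>
          intro hs _
          have h0 : Nat.find hex = 0 := by omega
          exact h0 ▸ Nat.find_spec hex
        | succ k ih =>
          intro hs hsm
          rcases eq_or_lt_of_le hs with heq | hlt'
          · have := Nat.find_spec hex
            rwa [← heq]
          · exact hstepP k (by omega) (ih (by omega) (by omega))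
      exact hall r hr₀r hrm
    rw [hP] at hPr
    rw [gt_iff_lt, ← not_le]
    intro hc
    exact absurd ((hle r).mp hc) (not_le.mpr hPr)
end

section
/- Let ω > 1 be real, m ≥ 0 an integer, r' = ⌊(m+2)/(ω+1)⌋, and g(r) = ω^{-r}·∑_{i=0}^{r} C(m,i). Then g(0) < g(1) < ... < g(r'-1) ≤ g(r'). Moreover the final inequality is strict if r' > 1 or ω ≠ m+1. -/
lemma natlem (r : ℕ) : ∀ a : ℕ,
    (a + 1) * ∑ i ∈ Finset.range (r + 1), (2 * r + a).choose i
      ≤ (r + a + 1) * (2 * r + a).choose r := by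
  induction r with
  | zero => intro a; simp
  | succ r ih =>
    intro a
    have ih' := ih (a + 2)
    have hm : 2 * (r + 1) + a = 2 * r + (a + 2) := by ring
    rw [hm, Finset.sum_range_succ]
    set m := 2 * r + (a + 2) with hmdef
    set S := ∑ i ∈ Finset.range (r + 1), m.choose i with hS
    set C0 := m.choose r with hC0
    set C1 := m.choose (r + 1) with hC1
    have hid : C1 * (r + 1) = C0 * (m - r) := Nat.choose_succ_right_eq m r
    have hmr : m - r = r + a + 2 := by omega
    rw [hmr] at hid
    have e1 : (a + 2 + 1) * S = (a + 3) * S := by ring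
    have e2 : (r + (a + 2) + 1) * C0 = (r + a + 3) * C0 := by ring
    rw [e1, e2] at ih'
    have key : (a + 1) * S ≤ (r + 1) * C1 := by
      have h1 : (a + 3) * ((a + 1) * S) ≤ (a + 3) * ((r + 1) * C1) := by
        calc (a + 3) * ((a + 1) * S) = (a + 1) * ((a + 3) * S) := by ring
          _ ≤ (a + 1) * ((r + a + 3) * C0) := Nat.mul_le_mul_left _ ih'
          _ ≤ (a + 3) * ((r + a + 2) * C0) := by nlinarith [Nat.zero_le C0]
          _ = (a + 3) * ((r + 1) * C1) := by rw [show (r+a+2) * C0 = C0 * (r+a+2) by ring, ← hid]; ring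
      exact Nat.le_of_mul_le_mul_left h1 (by omega)
    nlinarith [key]

section Key
variable (ω : ℝ) (hω : 1 < ω) (m r : ℕ)
  (h : (ω + 1) * ((r : ℝ) + 1) ≤ (m : ℝ) + 2)

include hω h in
lemma setup : ∃ a : ℕ, m = 2 * r + a ∧ 1 ≤ a ∧
    ((a : ℝ) + 1) * (∑ i ∈ Finset.range (r + 1), (m.choose i : ℝ))
      ≤ ((r : ℝ) + a + 1) * (m.choose r : ℝ) ∧
    (m.choose (r + 1) : ℝ) * ((r : ℝ) + 1) = (m.choose r : ℝ) * ((r : ℝ) + a) ∧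
    (ω - 1) * ((r : ℝ) + 1) ≤ (a : ℝ) ∧
    (0 : ℝ) < (m.choose r : ℝ) := by
  have h2m : 2 * r < m := by
    have : (2 : ℝ) * ((r : ℝ) + 1) < (m : ℝ) + 2 := by nlinarith [Nat.cast_nonneg (α := ℝ) r]
    exact_mod_cast (by push_cast; linarith : ((2 * r : ℕ) : ℝ) < (m : ℕ))
  refine ⟨m - 2 * r, by omega, by omega, ?_, ?_, ?_, ?_⟩
  · have := natlem r (m - 2 * r)
    rw [show 2 * r + (m - 2 * r) = m by omega] at this
    exact_mod_cast this
  · have hid := Nat.choose_succ_right_eq m r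
    have : m - r = r + (m - 2 * r) := by omega
    rw [this] at hid
    exact_mod_cast hid
  · push_cast [show ((m - 2*r : ℕ) : ℝ) = (m : ℝ) - 2*r by
      push_cast [Nat.cast_sub (by omega : 2*r ≤ m)]; ring]
    nlinarith
  · exact_mod_cast Nat.choose_pos (by omega : r ≤ m)

include hω h in
lemma keyle : (ω - 1) * ∑ i ∈ Finset.range (r + 1), (m.choose i : ℝ)
    ≤ (m.choose (r + 1) : ℝ) := by
  obtain ⟨a, hm, ha, f1, f2, f3, f5⟩ := setup ω hω m r h
  set S := ∑ i ∈ Finset.range (r + 1), (m.choose i : ℝ) with hSdef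
  have hS0 : (0:ℝ) ≤ S := Finset.sum_nonneg fun i _ => Nat.cast_nonneg _
  set C0 := (m.choose r : ℝ)
  set C1 := (m.choose (r + 1) : ℝ)
  have ha0 : (0:ℝ) ≤ a := Nat.cast_nonneg a
  have hr0 : (0:ℝ) ≤ r := Nat.cast_nonneg r
  have big : (ω - 1) * S * (((r:ℝ) + 1) * ((a:ℝ) + 1)) ≤ C1 * (((r:ℝ) + 1) * ((a:ℝ) + 1)) := by
    have step1 : (ω - 1) * S * ((r:ℝ) + 1) ≤ (a:ℝ) * S := by nlinarith
    have step2 : (a:ℝ) * (((a:ℝ) + 1) * S) ≤ (a:ℝ) * (((r:ℝ) + (a:ℝ) + 1) * C0) := by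
      nlinarith
    have step3 : (a:ℝ) * (((r:ℝ) + (a:ℝ) + 1) * C0) ≤ ((a:ℝ) + 1) * (((r:ℝ) + (a:ℝ)) * C0) := by
      nlinarith
    nlinarith [f2]
  have hpos : (0:ℝ) < ((r:ℝ) + 1) * ((a:ℝ) + 1) := by positivity
  exact le_of_mul_le_mul_right big hpos

include hω h in
lemma keylt (hs : 1 ≤ r ∨ ω < (m : ℝ) + 1) :
    (ω - 1) * ∑ i ∈ Finset.range (r + 1), (m.choose i : ℝ)
    < (m.choose (r + 1) : ℝ) := by
  rcases hs with hs | hs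
  · obtain ⟨a, hm, ha, f1, f2, f3, f5⟩ := setup ω hω m r h
    set S := ∑ i ∈ Finset.range (r + 1), (m.choose i : ℝ) with hSdef
    have hS0 : (0:ℝ) ≤ S := Finset.sum_nonneg fun i _ => Nat.cast_nonneg _
    set C0 := (m.choose r : ℝ)
    set C1 := (m.choose (r + 1) : ℝ)
    have ha1 : (1:ℝ) ≤ a := by exact_mod_cast ha
    have hr1 : (1:ℝ) ≤ r := by exact_mod_cast hs
    have big : (ω - 1) * S * (((r:ℝ) + 1) * ((a:ℝ) + 1)) < C1 * (((r:ℝ) + 1) * ((a:ℝ) + 1)) := by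
      have step1 : (ω - 1) * S * ((r:ℝ) + 1) ≤ (a:ℝ) * S := by nlinarith
      have step2 : (a:ℝ) * (((a:ℝ) + 1) * S) ≤ (a:ℝ) * (((r:ℝ) + (a:ℝ) + 1) * C0) := by
        nlinarith
      have step3 : (a:ℝ) * (((r:ℝ) + (a:ℝ) + 1) * C0) < ((a:ℝ) + 1) * (((r:ℝ) + (a:ℝ)) * C0) := by
        nlinarith
      nlinarith [f2]
    have hpos : (0:ℝ) < ((r:ℝ) + 1) * ((a:ℝ) + 1) := by positivity
    exact lt_of_mul_lt_mul_right big hpos.le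
  ·
    rcases Nat.eq_zero_or_pos r with hr0 | hr0
    · subst hr0
      norm_num [Finset.sum_range_one]
      linarith
    · obtain ⟨a, hm, ha, f1, f2, f3, f5⟩ := setup ω hω m r h
      set S := ∑ i ∈ Finset.range (r + 1), (m.choose i : ℝ) with hSdef
      have hS0 : (0:ℝ) ≤ S := Finset.sum_nonneg fun i _ => Nat.cast_nonneg _
      set C0 := (m.choose r : ℝ)
      set C1 := (m.choose (r + 1) : ℝ)
      have ha1 : (1:ℝ) ≤ a := by exact_mod_cast ha
      have hr1 : (1:ℝ) ≤ r := by exact_mod_cast hr0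
      have big : (ω - 1) * S * (((r:ℝ) + 1) * ((a:ℝ) + 1)) < C1 * (((r:ℝ) + 1) * ((a:ℝ) + 1)) := by
        have step1 : (ω - 1) * S * ((r:ℝ) + 1) ≤ (a:ℝ) * S := by nlinarith
        have step2 : (a:ℝ) * (((a:ℝ) + 1) * S) ≤ (a:ℝ) * (((r:ℝ) + (a:ℝ) + 1) * C0) := by
          nlinarith
        have step3 : (a:ℝ) * (((r:ℝ) + (a:ℝ) + 1) * C0) < ((a:ℝ) + 1) * (((r:ℝ) + (a:ℝ)) * C0) := by
          nlinarith
        nlinarith [f2]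
      have hpos : (0:ℝ) < ((r:ℝ) + 1) * ((a:ℝ) + 1) := by positivity
      exact lt_of_mul_lt_mul_right big hpos.le
end Key

theorem stmt_9 (ω : ℝ) (hω : 1 < ω) (m : ℕ)
    (g : ℕ → ℝ)
    (hg : ∀ r, g r = (ω ^ r)⁻¹ * ∑ i ∈ Finset.range (r + 1), (Nat.choose m i : ℝ))
    (r' : ℕ) (hr' : r' = ⌊((m : ℝ) + 2) / (ω + 1)⌋₊) :
    (∀ r, r + 2 ≤ r' → g r < g (r + 1)) ∧
    (1 ≤ r' → g (r' - 1) ≤ g r') ∧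
    ((1 < r' ∨ ω ≠ (m : ℝ) + 1) → 1 ≤ r' → g (r' - 1) < g r') := by
  have hω0 : (0:ℝ) < ω := by linarith
  have hm0 : (0:ℝ) ≤ (m:ℝ) := Nat.cast_nonneg m
  -- floor fact
  have hfl : ∀ k : ℕ, k ≤ r' → (ω + 1) * (k : ℝ) ≤ (m : ℝ) + 2 := by
    intro k hk
    have h0 : (0:ℝ) ≤ ((m:ℝ) + 2) / (ω + 1) := by positivity
    have h1 : (k : ℝ) ≤ ((m:ℝ) + 2) / (ω + 1) := by
      calc (k : ℝ) ≤ (r' : ℝ) := by exact_mod_cast hk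
        _ ≤ ((m:ℝ) + 2) / (ω + 1) := by rw [hr']; exact Nat.floor_le h0
    have := (le_div_iff₀ (by linarith : (0:ℝ) < ω + 1)).mp h1
    linarith
  -- comparison reductions
  have hred : ∀ r : ℕ, g (r + 1) - g r
      = (ω ^ (r+1))⁻¹ * ((m.choose (r+1) : ℝ)
          - (ω - 1) * ∑ i ∈ Finset.range (r + 1), (m.choose i : ℝ)) := by
    intro r
    rw [hg r, hg (r+1), Finset.sum_range_succ, pow_succ]
    have h1 : ω ^ r ≠ 0 := by positivity
    have h2 : ω ≠ 0 := by positivity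
    field_simp
    ring
  have hlt : ∀ r : ℕ,
      (ω - 1) * ∑ i ∈ Finset.range (r + 1), (m.choose i : ℝ) < (m.choose (r+1) : ℝ) →
      g r < g (r + 1) := by
    intro r hr
    have hp : (0:ℝ) < (ω ^ (r+1))⁻¹ := by positivity
    nlinarith [hred r]
  have hle : ∀ r : ℕ,
      (ω - 1) * ∑ i ∈ Finset.range (r + 1), (m.choose i : ℝ) ≤ (m.choose (r+1) : ℝ) →
      g r ≤ g (r + 1) := by
    intro r hr
    have hp : (0:ℝ) < (ω ^ (r+1))⁻¹ := by positivity
    nlinarith [hred r]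
  refine ⟨?_, ?_, ?_⟩
  · intro r hr
    have h2 := hfl (r + 2) hr
    push_cast at h2
    have hyp : (ω + 1) * ((r : ℝ) + 1) ≤ (m : ℝ) + 2 := by nlinarith
    apply hlt r
    apply keylt ω hω m r hyp
    rcases Nat.eq_zero_or_pos r with h0 | h0
    · right; subst h0; push_cast at h2 ⊢; nlinarith
    · left; exact h0
  · intro h1
    obtain ⟨r, rfl⟩ : ∃ r, r' = r + 1 := ⟨r' - 1, by omega⟩
    have h2 := hfl (r + 1) le_rfl
    push_cast at h2
    simpa using hle r (keyle ω hω m r h2)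
  · intro hd h1
    obtain ⟨r, rfl⟩ : ∃ r, r' = r + 1 := ⟨r' - 1, by omega⟩
    have h2 := hfl (r + 1) le_rfl
    push_cast at h2
    have hs : 1 ≤ r ∨ ω < (m : ℝ) + 1 := by
      rcases hd with hd | hd
      · left; omega
      · rcases Nat.eq_zero_or_pos r with h0 | h0
        · right
          subst h0
          push_cast at h2
          rcases lt_or_eq_of_le (by linarith : ω ≤ (m:ℝ) + 1) with h | h
          · exact h
          · exact absurd h hd
        · left; exact h0
    simpa using hlt r (keylt ω hω m r h2 hs)
end

section
/- Let ω ∈ {3,4,5,...} be an integer, m ≥ 0 an integer, and r' = ⌊(m+2)/(ω+1)⌋. Define g(r) = ω^{-r}·∑_{i=0}^{r} C(m,i). Then g(0) < ... < g(r'-1) ≤ g(r') > g(r'+1) > ... > g(m), with the equality g(r'-1) = g(r') occurring if and only if ω = m+1. -/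
open Finset

private def Sb (m r : ℕ) : ℝ := ∑ i ∈ Finset.range (r + 1), (Nat.choose m i : ℝ)

private def Tb (m r : ℕ) : ℝ := ∑ k ∈ Finset.range r, Sb m k

private lemma Sb_succ (m r : ℕ) : Sb m (r + 1) = Sb m r + (Nat.choose m (r + 1) : ℝ) :=
  Finset.sum_range_succ _ _

private lemma Tb_succ (m r : ℕ) : Tb m (r + 1) = Tb m r + Sb m r :=
  Finset.sum_range_succ _ _

private lemma Sb_zero (m : ℕ) : Sb m 0 = 1 := by simp [Sb]

private lemma one_le_Sb (m r : ℕ) : 1 ≤ Sb m r := by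
  have h : ((Nat.choose m 0 : ℕ) : ℝ) ≤ Sb m r := by
    apply Finset.single_le_sum (f := fun i => ((Nat.choose m i : ℕ) : ℝ))
    · intro i _; positivity
    · simp
  simpa using h

private lemma Sb_pos (m r : ℕ) : 0 < Sb m r := lt_of_lt_of_le one_pos (one_le_Sb m r)

private lemma Sb_nonneg (m r : ℕ) : 0 ≤ Sb m r := (Sb_pos m r).le

private lemma Tb_nonneg (m r : ℕ) : 0 ≤ Tb m r :=
  Finset.sum_nonneg fun k _ => Sb_nonneg m k

private lemma choose_le_Sb (m r : ℕ) : (Nat.choose m r : ℝ) ≤ Sb m r := by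
  apply Finset.single_le_sum (f := fun i => ((Nat.choose m i : ℕ) : ℝ))
  · intro i _; positivity
  · simp

private lemma hCk (m k : ℕ) :
    ((k : ℝ) + 1) * (Nat.choose m (k + 1) : ℝ) = ((m : ℝ) - k) * (Nat.choose m k : ℝ) := by
  rcases le_or_gt k m with h | h
  · have hc := Nat.choose_succ_right_eq m k
    have hc2 : ((Nat.choose m (k + 1) * (k + 1) : ℕ) : ℝ) = ((Nat.choose m k * (m - k) : ℕ) : ℝ) := by
      exact_mod_cast congrArg (fun x : ℕ => (x : ℝ)) hc
    push_cast [Nat.cast_sub h] at hc2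
    linear_combination hc2
  · have h1 : Nat.choose m k = 0 := Nat.choose_eq_zero_of_lt h
    have h2 : Nat.choose m (k + 1) = 0 := Nat.choose_eq_zero_of_lt (by omega)
    simp [h1, h2]

private lemma keyid (m : ℕ) : ∀ r : ℕ,
    ((r : ℝ) + 1) * (Nat.choose m (r + 1) : ℝ) = ((m : ℝ) - 2 * r) * Sb m r + 2 * Tb m r := by
  intro r
  induction r with
  | zero => simp [Sb_zero, Tb, Nat.choose_one_right]
  | succ r ih =>
    have h1 := hCk m (r + 1)
    rw [Sb_succ, Tb_succ]
    push_cast at h1 ⊢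
    linear_combination h1 + ih

private lemma LSb (m r k : ℕ) (hk : k + 1 ≤ r) (hrm : r ≤ m) :
    ((m : ℝ) - r + 1) * Sb m k ≤ (r : ℝ) * Sb m (k + 1) := by
  have hterm : ∀ i, i ≤ k →
      ((m : ℝ) - r + 1) * (Nat.choose m i : ℝ) ≤ (r : ℝ) * (Nat.choose m (i + 1) : ℝ) := by
    intro i hi
    have h1 := hCk m i
    have hp1 : (0:ℝ) ≤ (Nat.choose m i : ℝ) := by positivity
    have hp2 : (0:ℝ) ≤ (Nat.choose m (i + 1) : ℝ) := by positivity
    have ha : (0:ℝ) ≤ (r : ℝ) - (i : ℝ) - 1 := by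
      have : i + 1 ≤ r := le_trans (by omega) hk
      have := (Nat.cast_le (α := ℝ)).mpr this
      push_cast at this
      linarith
    nlinarith [mul_nonneg ha hp1, mul_nonneg ha hp2]
  have h2 : ((m : ℝ) - r + 1) * Sb m k =
      ∑ i ∈ Finset.range (k + 1), ((m : ℝ) - r + 1) * (Nat.choose m i : ℝ) := by
    rw [Sb, Finset.mul_sum]
  have h3 : ∑ i ∈ Finset.range (k + 1), ((m : ℝ) - r + 1) * (Nat.choose m i : ℝ) ≤
      ∑ i ∈ Finset.range (k + 1), (r : ℝ) * (Nat.choose m (i + 1) : ℝ) :=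
    Finset.sum_le_sum (fun i hi => hterm i (by simpa [Nat.lt_succ_iff] using hi))
  have h4 : (∑ i ∈ Finset.range (k + 1), (Nat.choose m (i + 1) : ℝ)) = Sb m (k + 1) - 1 := by
    have h := Finset.sum_range_succ' (fun i => (Nat.choose m i : ℝ)) (k + 1)
    have h0 : ((Nat.choose m 0 : ℕ) : ℝ) = 1 := by simp
    rw [h0] at h
    have : Sb m (k + 1) = (∑ i ∈ Finset.range (k + 1), (Nat.choose m (i + 1) : ℝ)) + 1 := h
    linarith
  have h5 : ∑ i ∈ Finset.range (k + 1), (r : ℝ) * (Nat.choose m (i + 1) : ℝ) =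
      (r : ℝ) * (Sb m (k + 1) - 1) := by
    rw [← Finset.mul_sum, h4]
  have hr0 : (0:ℝ) ≤ (r : ℝ) := by positivity
  calc ((m : ℝ) - r + 1) * Sb m k ≤ (r : ℝ) * (Sb m (k + 1) - 1) := by
        rw [h2]; rw [h5] at h3; exact h3
    _ ≤ (r : ℝ) * Sb m (k + 1) := by nlinarith

private lemma LTb (m r : ℕ) (hrm : r ≤ m) (h2 : 2 * r ≤ m) :
    ∀ j, j + 1 ≤ r → ((m : ℝ) - 2 * r + 1) * Tb m (j + 1) ≤ ((m : ℝ) - r + 1) * Sb m j := by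
  intro j
  induction j with
  | zero =>
    intro _
    have hT1 : Tb m 1 = Sb m 0 := by simp [Tb]
    rw [hT1]
    have hco : ((m:ℝ) - 2 * r + 1) ≤ ((m:ℝ) - r + 1) := by
      have : (0:ℝ) ≤ (r : ℝ) := by positivity
      linarith
    exact mul_le_mul_of_nonneg_right hco (Sb_nonneg m 0)
  | succ j ih =>
    intro h
    have hih := ih (by omega)
    have hls := LSb m r j (by omega) hrm
    rw [Tb_succ]
    push_cast at hih hls ⊢
    nlinarith [hih, hls, Sb_nonneg m (j + 1)]

private lemma LAb (m : ℕ) : ∀ r, 2 * r ≤ m →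
    ((m : ℝ) - 2 * r + 1) * Sb m r ≤ ((m : ℝ) - r + 1) * (Nat.choose m r : ℝ) := by
  intro r
  induction r with
  | zero => intro _; simp [Sb_zero]
  | succ r ih =>
    intro h
    have ihh := ih (by omega)
    have h1 := hCk m r
    have hs := choose_le_Sb m r
    have hp : (0:ℝ) ≤ (Nat.choose m r : ℝ) := by positivity
    rw [Sb_succ]
    push_cast at ihh h1 hs ⊢
    nlinarith [ihh, h1, hs, hp]

private lemma poly1 (x y : ℝ) (hy : 0 ≤ y) (hx : 4 * y + 5 ≤ x) :
    (x + 1) * (x - y + 1) * (y + 1) < (x - 2 * y - 1) * (x - 2 * y + 1) * (x - y) := by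
  nlinarith [sq_nonneg (x - 4 * y - 5), mul_nonneg (sub_nonneg.mpr hx) hy,
    mul_nonneg (mul_nonneg (sub_nonneg.mpr hx) hy) hy, sq_nonneg y,
    mul_nonneg (sub_nonneg.mpr hx) (sub_nonneg.mpr hx),
    mul_nonneg (mul_nonneg (sub_nonneg.mpr hx) (sub_nonneg.mpr hx)) (sub_nonneg.mpr hx),
    mul_nonneg (mul_nonneg (sub_nonneg.mpr hx) (sub_nonneg.mpr hx)) hy,
    mul_nonneg hy hy, mul_nonneg (mul_nonneg hy hy) hy]

private lemma poly2 (x y : ℝ) (hy : 1 ≤ y) (hx : 3 * y + 6 ≤ x) :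
    (y + 1) ^ 2 * (x - y + 1) < (x - 2 * y - 1) * (x - 2 * y + 1) * (x - y) := by
  have hw : 0 ≤ y - 1 := by linarith
  have hz : 0 ≤ x - 3 * y - 6 := by linarith
  nlinarith [mul_nonneg hz hw, mul_nonneg (mul_nonneg hz hw) hw, mul_nonneg hz hz,
    mul_nonneg (mul_nonneg hz hz) hz, mul_nonneg (mul_nonneg hz hz) hw,
    mul_nonneg hw hw, mul_nonneg (mul_nonneg hw hw) hw]

private lemma P1 (m s : ℕ) (hm : 4 * s + 5 ≤ m) : 2 * Tb m (s + 1) < Sb m (s + 1) := by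
  have hrm : s + 1 ≤ m := by omega
  have h2 : 2 * (s + 1) ≤ m := by omega
  have hLT := LTb m (s + 1) hrm h2 s (le_refl _)
  have hLA := LAb m s (by omega)
  have hC := hCk m s
  have hx : 4 * (s : ℝ) + 5 ≤ (m : ℝ) := by exact_mod_cast hm
  have hy : (0:ℝ) ≤ (s : ℝ) := by positivity
  have hCs : (0:ℝ) < (Nat.choose m s : ℝ) := by
    exact_mod_cast Nat.choose_pos (by omega : s ≤ m)
  have hCs1 : (0:ℝ) < (Nat.choose m (s + 1) : ℝ) := by
    exact_mod_cast Nat.choose_pos hrm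
  set x := (m : ℝ)
  set y := (s : ℝ)
  set S := Sb m s with hSdef
  set C0 := (Nat.choose m s : ℝ)
  set C1 := (Nat.choose m (s + 1) : ℝ)
  set T := Tb m (s + 1)
  -- normalize casts in hLT
  push_cast at hLT hC
  -- hLT : (x - 2*(y+1) + 1) * T ≤ (x - (y+1) + 1) * S
  -- hLA : (x - 2*y + 1) * S ≤ (x - y + 1) * C0
  -- hC  : (y+1) * C1 = (x - y) * C0
  have hd := poly1 x y hy hx
  -- step 1 : (x+1) * S < (x - 2y - 1) * C1
  have hposxy : (0:ℝ) < (y + 1) * (x - 2 * y + 1) := by nlinarith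
  have k1 : ((x + 1) * (y + 1)) * ((x - 2 * y + 1) * S) ≤ ((x + 1) * (y + 1)) * ((x - y + 1) * C0) := by
    apply mul_le_mul_of_nonneg_left hLA
    nlinarith
  have k2 : (x + 1) * (x - y + 1) * (y + 1) * C0 < (x - 2 * y - 1) * (x - 2 * y + 1) * (x - y) * C0 :=
    mul_lt_mul_of_pos_right hd hCs
  have k4 : (x - 2 * y - 1) * (x - 2 * y + 1) * ((x - y) * C0)
      = (x - 2 * y - 1) * (x - 2 * y + 1) * ((y + 1) * C1) := by rw [← hC]
  have step1m : ((y + 1) * (x - 2 * y + 1)) * ((x + 1) * S)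
      < ((y + 1) * (x - 2 * y + 1)) * ((x - 2 * y - 1) * C1) := by nlinarith [k1, k2, k4]
  have step1 : (x + 1) * S < (x - 2 * y - 1) * C1 :=
    lt_of_mul_lt_mul_left step1m hposxy.le
  -- step 2
  have hpos2 : (0:ℝ) < x - 2 * y - 1 := by nlinarith
  have step2m : (x - 2 * y - 1) * (2 * T) < (x - 2 * y - 1) * (S + C1) := by nlinarith [hLT, step1]
  have step2 : 2 * T < S + C1 := lt_of_mul_lt_mul_left step2m hpos2.le
  rw [Sb_succ]
  exact step2

private lemma P2 (m s : ℕ) (hs : 1 ≤ s) (hm : 3 * s + 6 ≤ m) : Tb m (s + 1) < Sb m (s + 1) := by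
  have hrm : s + 1 ≤ m := by omega
  have h2 : 2 * (s + 1) ≤ m := by omega
  have hLT := LTb m (s + 1) hrm h2 s (le_refl _)
  have hLA := LAb m s (by omega)
  have hC := hCk m s
  have hx : 3 * (s : ℝ) + 6 ≤ (m : ℝ) := by exact_mod_cast hm
  have hy : (1:ℝ) ≤ (s : ℝ) := by exact_mod_cast hs
  have hCs : (0:ℝ) < (Nat.choose m s : ℝ) := by
    exact_mod_cast Nat.choose_pos (by omega : s ≤ m)
  have hCs1 : (0:ℝ) < (Nat.choose m (s + 1) : ℝ) := by
    exact_mod_cast Nat.choose_pos hrm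
  set x := (m : ℝ)
  set y := (s : ℝ)
  set S := Sb m s
  set C0 := (Nat.choose m s : ℝ)
  set C1 := (Nat.choose m (s + 1) : ℝ)
  set T := Tb m (s + 1)
  push_cast at hLT hC
  have hd := poly2 x y hy hx
  have hposxy : (0:ℝ) < (y + 1) * (x - 2 * y + 1) := by nlinarith
  have k1 : ((y + 1) * (y + 1)) * ((x - 2 * y + 1) * S) ≤ ((y + 1) * (y + 1)) * ((x - y + 1) * C0) := by
    apply mul_le_mul_of_nonneg_left hLA
    nlinarith
  have k2 : (y + 1) ^ 2 * (x - y + 1) * C0 < (x - 2 * y - 1) * (x - 2 * y + 1) * (x - y) * C0 :=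
    mul_lt_mul_of_pos_right hd hCs
  have k4 : (x - 2 * y - 1) * (x - 2 * y + 1) * ((x - y) * C0)
      = (x - 2 * y - 1) * (x - 2 * y + 1) * ((y + 1) * C1) := by rw [← hC]
  have step1m : ((y + 1) * (x - 2 * y + 1)) * ((y + 1) * S)
      < ((y + 1) * (x - 2 * y + 1)) * ((x - 2 * y - 1) * C1) := by nlinarith [k1, k2, k4]
  have step1 : (y + 1) * S < (x - 2 * y - 1) * C1 :=
    lt_of_mul_lt_mul_left step1m hposxy.le
  have hpos2 : (0:ℝ) < x - 2 * y - 1 := by nlinarith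
  have step2m : (x - 2 * y - 1) * T < (x - 2 * y - 1) * (S + C1) := by nlinarith [hLT, step1]
  have step2 : T < S + C1 := lt_of_mul_lt_mul_left step2m hpos2.le
  rw [Sb_succ]
  exact step2

private lemma declem (ω m r : ℕ) (hω : 3 ≤ ω) (h : m + 3 ≤ (ω + 1) * (r + 1)) :
    (Nat.choose m (r + 1) : ℝ) < ((ω : ℝ) - 1) * Sb m r := by
  have hωR : (3:ℝ) ≤ (ω : ℝ) := by exact_mod_cast hω
  rcases Nat.eq_zero_or_pos r with hr0 | hrpos
  · subst hr0
    have hm : m + 2 ≤ ω := by omega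
    have hmR : (m:ℝ) + 2 ≤ (ω:ℝ) := by exact_mod_cast hm
    rw [Sb_zero, Nat.choose_one_right]
    linarith
  · rcases le_or_gt (m + 1) (ω * (r + 1)) with hA | hB
    · -- easy case: m + 1 ≤ ω(r+1)
      rcases lt_or_ge m (r + 1) with hrm | hrm
      · rw [Nat.choose_eq_zero_of_lt hrm]
        push_cast
        have := Sb_pos m r
        nlinarith
      · have hC := hCk m r
        have hAR : (m:ℝ) + 1 ≤ (ω:ℝ) * ((r:ℝ) + 1) := by exact_mod_cast hA
        have h1 : ((m:ℝ) - r) ≤ ((ω:ℝ) - 1) * ((r:ℝ) + 1) := by nlinarith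
        have hCr : (0:ℝ) < (Nat.choose m r : ℝ) := by
          exact_mod_cast Nat.choose_pos (by omega : r ≤ m)
        have hS : (Nat.choose m r : ℝ) + 1 ≤ Sb m r := by
          obtain ⟨r'', rfl⟩ : ∃ r'', r = r'' + 1 := ⟨r - 1, by omega⟩
          rw [Sb_succ]
          linarith [one_le_Sb m r'']
        have hpos : (0:ℝ) < ((ω:ℝ) - 1) * ((r:ℝ) + 1) := by
          have : (0:ℝ) ≤ (r:ℝ) := by positivity
          nlinarith
        have p1 : ((m:ℝ) - r) * (Nat.choose m r : ℝ) ≤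
            (((ω:ℝ) - 1) * ((r:ℝ) + 1)) * (Nat.choose m r : ℝ) :=
          mul_le_mul_of_nonneg_right h1 hCr.le
        have p2 : (((ω:ℝ) - 1) * ((r:ℝ) + 1)) * ((Nat.choose m r : ℝ) + 1) ≤
            (((ω:ℝ) - 1) * ((r:ℝ) + 1)) * Sb m r :=
          mul_le_mul_of_nonneg_left hS hpos.le
        have hfin : ((r:ℝ) + 1) * (Nat.choose m (r + 1) : ℝ)
            < ((r:ℝ) + 1) * (((ω:ℝ) - 1) * Sb m r) := by nlinarith [hC, p1, p2, hpos]
        exact lt_of_mul_lt_mul_left hfin (by positivity)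
    · -- hard case: ω(r+1) ≤ m
      have hBn : ω * (r + 1) ≤ m := by omega
      have hexp : (ω + 1) * (r + 1) = ω * (r + 1) + (r + 1) := by ring
      rw [hexp] at h
      have hr2 : 2 ≤ r := by
        set a := ω * (r + 1) with ha
        omega
      have h3 : 3 * (r + 1) ≤ ω * (r + 1) := Nat.mul_le_mul_right _ hω
      have hm33 : 3 * r + 3 ≤ m := by
        set a := ω * (r + 1) with ha
        omega
      obtain ⟨s, rfl⟩ : ∃ s, r = s + 1 := ⟨r - 1, by omega⟩
      have hkey := keyid m (s + 1)
      rcases eq_or_lt_of_le h with hBeq | hBlt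
      · -- tightest case K = 2r - 1 : m + 3 = (ω+1)(r+1)
        have e : (ω + 1) * (s + 2) = ω * (s + 1 + 1) + (s + 1 + 1) := by ring
        have hBeq' : m + 3 = (ω + 1) * (s + 2) := by omega
        have h4 : 4 * (s + 2) ≤ (ω + 1) * (s + 2) := Nat.mul_le_mul_right _ (by omega)
        have hm41 : 4 * (s + 1) + 1 ≤ m := by omega
        have hp1 := P1 m s (by omega)
        have hBeqR : (m:ℝ) + 3 = ((ω:ℝ) + 1) * ((s:ℝ) + 2) := by
          exact_mod_cast hBeq'
        have hco : ((m:ℝ) - 2 * ((s:ℝ) + 1) + 1) * Sb m (s + 1)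
            = (((ω:ℝ) - 1) * ((s:ℝ) + 2)) * Sb m (s + 1) := by
          have : (m:ℝ) - 2 * ((s:ℝ) + 1) + 1 = ((ω:ℝ) - 1) * ((s:ℝ) + 2) := by nlinarith
          rw [this]
        have hfin : ((s:ℝ) + 2) * (Nat.choose m (s + 2) : ℝ)
            < ((s:ℝ) + 2) * (((ω:ℝ) - 1) * Sb m (s + 1)) := by
          push_cast at hkey ⊢
          nlinarith [hkey, hp1, hco]
        exact lt_of_mul_lt_mul_left hfin (by positivity)
      · -- K ≤ 2r - 2 : m + 4 ≤ (ω+1)(r+1)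
        have hp2 := P2 m s (by omega) (by omega)
        have hBltR : (m:ℝ) + 4 ≤ ((ω:ℝ) + 1) * ((s:ℝ) + 2) := by
          have e : (ω + 1) * (s + 2) = ω * (s + 1 + 1) + (s + 1 + 1) := by ring
          have : m + 4 ≤ (ω + 1) * (s + 2) := by omega
          exact_mod_cast this
        have hco : ((m:ℝ) - 2 * ((s:ℝ) + 1) + 2) ≤ ((ω:ℝ) - 1) * ((s:ℝ) + 2) := by nlinarith
        have hco2 : ((m:ℝ) - 2 * ((s:ℝ) + 1) + 2) * Sb m (s + 1)
            ≤ (((ω:ℝ) - 1) * ((s:ℝ) + 2)) * Sb m (s + 1) :=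
          mul_le_mul_of_nonneg_right hco (Sb_nonneg _ _)
        have hfin : ((s:ℝ) + 2) * (Nat.choose m (s + 2) : ℝ)
            < ((s:ℝ) + 2) * (((ω:ℝ) - 1) * Sb m (s + 1)) := by
          push_cast at hkey ⊢
          nlinarith [hkey, hp2, hco2, Sb_pos m (s + 1)]
        exact lt_of_mul_lt_mul_left hfin (by positivity)

private lemma midlem (ω m r : ℕ) (h : (ω + 1) * (r + 1) ≤ m + 2) :
    ((ω : ℝ) - 1) * Sb m r ≤ (Nat.choose m (r + 1) : ℝ) := by
  have hkey := keyid m r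
  have hR : ((ω:ℝ) + 1) * ((r:ℝ) + 1) ≤ (m:ℝ) + 2 := by exact_mod_cast h
  have hco : ((ω:ℝ) - 1) * ((r:ℝ) + 1) ≤ (m:ℝ) - 2 * r := by nlinarith
  have hT := Tb_nonneg m r
  have hS := Sb_nonneg m r
  have h1 : ((r:ℝ) + 1) * (((ω:ℝ) - 1) * Sb m r) ≤ ((r:ℝ) + 1) * (Nat.choose m (r + 1) : ℝ) := by
    nlinarith [hkey, mul_le_mul_of_nonneg_right hco hS, hT]
  exact le_of_mul_le_mul_left h1 (by positivity)

private lemma inclem (ω m r : ℕ) (h : (ω + 1) * (r + 2) ≤ m + 2) :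
    ((ω : ℝ) - 1) * Sb m r < (Nat.choose m (r + 1) : ℝ) := by
  have hkey := keyid m r
  have hR : ((ω:ℝ) + 1) * ((r:ℝ) + 2) ≤ (m:ℝ) + 2 := by exact_mod_cast h
  have hω0 : (0:ℝ) ≤ (ω:ℝ) := by positivity
  have hco : ((ω:ℝ) - 1) * ((r:ℝ) + 1) + 1 ≤ (m:ℝ) - 2 * r := by nlinarith
  have hT := Tb_nonneg m r
  have hS := Sb_pos m r
  have h1 : ((r:ℝ) + 1) * (((ω:ℝ) - 1) * Sb m r) < ((r:ℝ) + 1) * (Nat.choose m (r + 1) : ℝ) := by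
    nlinarith [hkey, mul_le_mul_of_nonneg_right hco hS.le, hT]
  exact lt_of_mul_lt_mul_left h1 (by positivity)

private lemma eqlem (ω m r : ℕ) (h : (ω + 1) * (r + 1) ≤ m + 2)
    (he : ((ω : ℝ) - 1) * Sb m r = (Nat.choose m (r + 1) : ℝ)) : r = 0 ∧ ω = m + 1 := by
  have hkey := keyid m r
  have hR : ((ω:ℝ) + 1) * ((r:ℝ) + 1) ≤ (m:ℝ) + 2 := by exact_mod_cast h
  have hco : ((ω:ℝ) - 1) * ((r:ℝ) + 1) ≤ (m:ℝ) - 2 * r := by nlinarith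
  have hS := Sb_pos m r
  -- from he and hkey : (m - 2r - (ω-1)(r+1)) * S + 2 T = 0 with both summands ≥ 0
  have hsum : (((m:ℝ) - 2 * r) - ((ω:ℝ) - 1) * ((r:ℝ) + 1)) * Sb m r + 2 * Tb m r = 0 := by
    nlinarith [hkey, he]
  have hT0 : Tb m r = 0 := by
    have h1 : (0:ℝ) ≤ (((m:ℝ) - 2 * r) - ((ω:ℝ) - 1) * ((r:ℝ) + 1)) * Sb m r :=
      mul_nonneg (by linarith) hS.le
    have h2 := Tb_nonneg m r
    linarith
  have hr0 : r = 0 := by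
    by_contra hne
    have hr1 : 1 ≤ r := by omega
    have : (1:ℝ) ≤ Tb m r := by
      have h0 : ((fun k => Sb m k) 0) ≤ ∑ k ∈ Finset.range r, Sb m k := by
        apply Finset.single_le_sum (f := fun k => Sb m k)
        · intro i _; exact Sb_nonneg m i
        · exact Finset.mem_range.mpr hr1
      calc (1:ℝ) ≤ Sb m 0 := one_le_Sb m 0
        _ ≤ Tb m r := h0
    linarith
  subst hr0
  constructor
  · rfl
  · have hS0 : Sb m 0 = 1 := Sb_zero m
    rw [hS0] at he
    rw [Nat.choose_one_right] at he
    have : (ω:ℝ) = (m:ℝ) + 1 := by linarith [he]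
    exact_mod_cast this

theorem stmt_10 (ω : ℕ) (hω : 3 ≤ ω) (m : ℕ)
    (g : ℕ → ℝ)
    (hg : ∀ r, g r = ((ω : ℝ) ^ r)⁻¹ * ∑ i ∈ Finset.range (r + 1), (Nat.choose m i : ℝ))
    (r' : ℕ) (hr' : r' = ⌊((m : ℝ) + 2) / ((ω : ℝ) + 1)⌋₊) :
    (∀ r, r + 2 ≤ r' → g r < g (r + 1)) ∧
    (1 ≤ r' → g (r' - 1) ≤ g r') ∧
    (∀ r, r' ≤ r → r < m → g r > g (r + 1)) ∧
    (1 ≤ r' → (g (r' - 1) = g r' ↔ ω = m + 1)) := by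
  have hωpos : (0:ℝ) < (ω : ℝ) := by
    have : 0 < ω := by omega
    exact_mod_cast this
  have hgS : ∀ k, g k = ((ω : ℝ) ^ k)⁻¹ * Sb m k := by
    intro k; rw [hg]; rfl
  have hrdiv : r' = (m + 2) / (ω + 1) := by
    rw [hr']
    rw [show ((m:ℝ) + 2) = (((m + 2 : ℕ) : ℝ)) from by push_cast; ring]
    rw [show ((ω:ℝ) + 1) = (((ω + 1 : ℕ) : ℝ)) from by push_cast; ring]
    rw [Nat.floor_div_natCast, Nat.floor_natCast]
  have hle : (ω + 1) * r' ≤ m + 2 := by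
    rw [hrdiv, mul_comm]
    exact Nat.div_mul_le_self _ _
  have hlt : m + 2 < (ω + 1) * (r' + 1) := by
    rw [hrdiv]
    have hmod := Nat.div_add_mod (m + 2) (ω + 1)
    have hmlt : (m + 2) % (ω + 1) < ω + 1 := Nat.mod_lt _ (by omega)
    have e : (ω + 1) * ((m + 2) / (ω + 1) + 1) = (ω + 1) * ((m + 2) / (ω + 1)) + (ω + 1) := by
      ring
    omega
  have hcmp : ∀ k : ℕ,
      (g k < g (k + 1) ↔ ((ω:ℝ) - 1) * Sb m k < (Nat.choose m (k + 1) : ℝ)) ∧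
      (g (k + 1) < g k ↔ (Nat.choose m (k + 1) : ℝ) < ((ω:ℝ) - 1) * Sb m k) ∧
      (g k = g (k + 1) ↔ ((ω:ℝ) - 1) * Sb m k = (Nat.choose m (k + 1) : ℝ)) := by
    intro k
    have hc : (0:ℝ) < (ω:ℝ) ^ k := by positivity
    have hcω : (0:ℝ) < (ω:ℝ) ^ k * (ω:ℝ) := by positivity
    have hg1 : g k = Sb m k / (ω:ℝ) ^ k := by rw [hgS k, inv_mul_eq_div]
    have hg2 : g (k + 1) = (Sb m k + (Nat.choose m (k + 1) : ℝ)) / ((ω:ℝ) ^ k * (ω:ℝ)) := by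
      rw [hgS (k + 1), inv_mul_eq_div, Sb_succ, pow_succ]
    refine ⟨?_, ?_, ?_⟩
    · rw [hg1, hg2, div_lt_div_iff₀ hc hcω,
        show Sb m k * ((ω:ℝ) ^ k * (ω:ℝ)) = (Sb m k * (ω:ℝ)) * (ω:ℝ) ^ k from by ring,
        mul_lt_mul_iff_of_pos_right hc]
      constructor <;> intro h <;> nlinarith [h]
    · rw [hg1, hg2, div_lt_div_iff₀ hcω hc,
        show Sb m k * ((ω:ℝ) ^ k * (ω:ℝ)) = (Sb m k * (ω:ℝ)) * (ω:ℝ) ^ k from by ring,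
        mul_lt_mul_iff_of_pos_right hc]
      constructor <;> intro h <;> nlinarith [h]
    · rw [hg1, hg2, div_eq_div_iff hc.ne' hcω.ne']
      constructor
      · intro h
        have h3 : (Sb m k * (ω:ℝ)) * ((ω:ℝ) ^ k) = (Sb m k + (Nat.choose m (k + 1) : ℝ)) * ((ω:ℝ) ^ k) := by
          linear_combination h
        have h2 := mul_right_cancel₀ hc.ne' h3
        linear_combination h2
      · intro h
        linear_combination ((ω:ℝ) ^ k) * h
  refine ⟨?_, ?_, ?_, ?_⟩
  · -- strictly increasing part
    intro r hrr
    exact (hcmp r).1.mpr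
      (inclem ω m r (le_trans (Nat.mul_le_mul_left _ (by omega : r + 2 ≤ r')) hle))
  · -- middle part
    intro h1
    obtain ⟨k, hk⟩ : ∃ k, r' = k + 1 := ⟨r' - 1, by omega⟩
    subst hk
    simp only [Nat.add_sub_cancel]
    by_contra hcon
    push_neg at hcon
    have hC := (hcmp k).2.1.mp hcon
    have hM := midlem ω m k hle
    linarith
  · -- strictly decreasing part
    intro r h1 _h2
    exact (hcmp r).2.1.mpr
      (declem ω m r hω (le_trans hlt (Nat.mul_le_mul_left _ (by omega : r' + 1 ≤ r + 1))))
  · -- equality characterization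
    intro h1
    obtain ⟨k, hk⟩ : ∃ k, r' = k + 1 := ⟨r' - 1, by omega⟩
    subst hk
    simp only [Nat.add_sub_cancel]
    constructor
    · intro heq
      have he := (hcmp k).2.2.mp heq
      exact (eqlem ω m k hle he).2
    · intro hωm
      subst hωm
      have hk0 : k = 0 := by
        have hd1 : (m + 2) / (m + 1 + 1) = 1 := Nat.div_self (by omega)
        omega
      subst hk0
      apply (hcmp 0).2.2.mpr
      rw [Sb_zero, Nat.choose_one_right]
      push_cast
      ring
end

section
/- Let ω ≥ √3 be a real number, m ≥ 0 an integer, and r' = ⌊(m+2)/(ω+1)⌋. Define g(r) = ω^{-r}·∑_{i=0}^{r} C(m,i). Then g(0) < ... < g(r'-1) ≤ g(r') and g(r'+1) > g(r'+2) > ... > g(m). Consequently the largest maximizing input r_0 of g satisfies r_0 ∈ {r', r'+1}. -/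
namespace Stmt11Aux

noncomputable def S (m r : ℕ) : ℝ := ∑ i ∈ Finset.range (r + 1), (Nat.choose m i : ℝ)

lemma S_succ (m r : ℕ) : S m (r + 1) = S m r + (Nat.choose m (r + 1) : ℝ) :=
  Finset.sum_range_succ _ _

lemma S_zero (m : ℕ) : S m 0 = 1 := by simp [S]

lemma one_le_S (m r : ℕ) : 1 ≤ S m r := by
  induction r with
  | zero => rw [S_zero]
  | succ n ih =>
    rw [S_succ]
    have : (0:ℝ) ≤ (Nat.choose m (n+1) : ℝ) := Nat.cast_nonneg _
    linarith

lemma key (m r : ℕ) :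
    ((r : ℝ) + 1) * (Nat.choose m (r + 1) : ℝ) = ((m : ℝ) - r) * (Nat.choose m r : ℝ) := by
  rcases le_or_gt r m with h | h
  · have h1 := Nat.choose_succ_right_eq m r
    have h2 : ((Nat.choose m (r+1) * (r+1) : ℕ) : ℝ) = ((Nat.choose m r * (m - r) : ℕ) : ℝ) := by
      exact_mod_cast congrArg (Nat.cast : ℕ → ℝ) h1
    rw [Nat.cast_mul, Nat.cast_mul, Nat.cast_sub h] at h2
    push_cast at h2 ⊢
    linarith
  · rw [Nat.choose_eq_zero_of_lt h, Nat.choose_eq_zero_of_lt (lt_trans h (Nat.lt_succ_self r))]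
    simp

/-- Upper bound invariant: (m-2r+1) S(r) ≤ (m-r+1) C(m,r) for 2r ≤ m. -/
lemma up (m : ℕ) : ∀ r : ℕ, 2 * (r : ℝ) ≤ (m : ℝ) →
    ((m : ℝ) - 2 * r + 1) * S m r ≤ ((m : ℝ) - r + 1) * (Nat.choose m r : ℝ) := by
  intro r
  induction r with
  | zero =>
    intro _
    rw [S_zero]
    norm_num
  | succ r IH =>
    intro h2
    push_cast at h2 ⊢
    have hr0 : (0 : ℝ) ≤ (r : ℝ) := Nat.cast_nonneg _
    have h2r : 2 * (r : ℝ) ≤ (m : ℝ) := by linarith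
    have ih := IH h2r
    have hkey := key m r
    have hb1 : (0:ℝ) ≤ (Nat.choose m (r+1) : ℝ) := Nat.cast_nonneg _
    have hS0 : (0:ℝ) ≤ S m r := by linarith [one_le_S m r]
    have h1 : (0:ℝ) < (m:ℝ) - r := by linarith
    have hden : (0:ℝ) < (m:ℝ) - 2*r + 1 := by linarith
    have h4 : (0:ℝ) ≤ (m:ℝ) - 2*r - 1 := by linarith
    have ha : (0:ℝ) ≤ (m:ℝ) - 2*r - 2 := by linarith
    -- t : (m-r)(m-2r+1) S ≤ (m-r+1)(r+1) b1
    have t0 := mul_le_mul_of_nonneg_left ih (le_of_lt h1)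
    have k2 : ((m:ℝ) - r + 1) * (((r:ℝ)+1) * (Nat.choose m (r+1) : ℝ))
        = ((m:ℝ) - r + 1) * (((m:ℝ) - r) * (Nat.choose m r : ℝ)) := by rw [hkey]
    have t : ((m:ℝ) - r) * (((m:ℝ) - 2*r + 1) * S m r)
        ≤ ((m:ℝ) - r + 1) * (((r:ℝ)+1) * (Nat.choose m (r+1) : ℝ)) := by nlinarith [t0, k2]
    have hSC : (0:ℝ) ≤ ((m:ℝ)-2*r+1)*((m:ℝ)-r)^2 - ((m:ℝ)-2*r-1)*((m:ℝ)-r+1)*((r:ℝ)+1)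
        - ((m:ℝ)-r)*((m:ℝ)-2*r+1)*((m:ℝ)-2*r-1) := by
      nlinarith [mul_nonneg ha hr0, sq_nonneg (r:ℝ), ha, hr0]
    have hbsc : (0:ℝ) ≤ (Nat.choose m (r+1) : ℝ) *
        (((m:ℝ)-2*r+1)*((m:ℝ)-r)^2 - ((m:ℝ)-2*r-1)*((m:ℝ)-r+1)*((r:ℝ)+1)
          - ((m:ℝ)-r)*((m:ℝ)-2*r+1)*((m:ℝ)-2*r-1)) := mul_nonneg hb1 hSC
    have hpos : (0:ℝ) ≤ ((m:ℝ)-r)*((m:ℝ)-2*r+1) := by positivity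
    rw [S_succ]
    nlinarith [t, hbsc, hpos, hb1, hS0, h4, mul_le_mul_of_nonneg_left t h4]

/-- Lower bound "traveling wave" invariant:
    (m-r) C(m,r) ≤ (m-2r+ω+1) S(r), valid while (ω+1)(r-1) ≤ m+2 and 2r ≤ m+ω+1. -/
lemma low (ω : ℝ) (hω17 : 1.7 ≤ ω) (hω2 : 3 ≤ ω ^ 2) (m : ℕ) :
    ∀ r : ℕ, (ω + 1) * (r : ℝ) ≤ (m : ℝ) + 2 + (ω + 1) → 2 * (r : ℝ) ≤ (m : ℝ) + ω + 1 →
    ((m : ℝ) - r) * (Nat.choose m r : ℝ) ≤ ((m : ℝ) - 2 * r + ω + 1) * S m r := by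
  intro r
  induction r with
  | zero =>
    intro _ _
    rw [S_zero]
    norm_num
    linarith
  | succ r IH =>
    intro hH1 hH2
    push_cast at hH1 hH2 ⊢
    have hr0 : (0 : ℝ) ≤ (r : ℝ) := Nat.cast_nonneg _
    have hH1r : (ω + 1) * (r : ℝ) ≤ (m : ℝ) + 2 + (ω + 1) := by nlinarith
    have hH2r : 2 * (r : ℝ) ≤ (m : ℝ) + ω + 1 := by linarith
    have ih := IH hH1r hH2r
    have hkey := key m r
    have hb1 : (0:ℝ) ≤ (Nat.choose m (r+1) : ℝ) := Nat.cast_nonneg _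
    have hA : (0:ℝ) ≤ (m:ℝ) - 2*r + ω - 1 := by linarith
    have hA' : (0:ℝ) < (m:ℝ) - 2*r + ω + 1 := by linarith
    -- ih with key: (m-2r+ω+1) S ≥ (r+1) b1
    have h_ih' : ((r:ℝ)+1) * (Nat.choose m (r+1) : ℝ) ≤ ((m:ℝ) - 2*r + ω + 1) * S m r := by
      linarith [hkey, ih]
    have t := mul_le_mul_of_nonneg_left h_ih' hA
    -- scalar ≥ 0
    have hsc : (0:ℝ) ≤ ((m:ℝ)-2*r+ω-1)*((m:ℝ)-r+ω+2) - ((m:ℝ)-2*r+ω+1)*((m:ℝ)-r-1) := by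
      have hp := mul_le_mul_of_nonneg_left (show (ω+1)*(r:ℝ) ≤ (m:ℝ)+2 by linarith)
        (show (0:ℝ) ≤ ω + 1 by linarith)
      have h32 : (0:ℝ) ≤ (ω^2 - 3) * ((r:ℝ)+1) :=
        mul_nonneg (by linarith) (by linarith)
      nlinarith [hp, h32]
    have hbsc := mul_nonneg hb1 hsc
    rw [S_succ]
    nlinarith [t, hbsc, hA', hb1, one_le_S m r]

/-- Strict ascending inequality. -/
lemma asc_strict (ω : ℝ) (hω17 : 1.7 ≤ ω) (m r : ℕ)
    (h : (ω + 1) * ((r : ℝ) + 2) ≤ (m : ℝ) + 2) :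
    (ω - 1) * S m r < (Nat.choose m (r + 1) : ℝ) := by
  have hr0 : (0 : ℝ) ≤ (r : ℝ) := Nat.cast_nonneg _
  have hwr : (0:ℝ) ≤ (ω - 1.7) * r := mul_nonneg (by linarith) hr0
  have h2r : 2 * (r:ℝ) ≤ (m:ℝ) := by nlinarith
  have hrm : (r:ℝ) ≤ (m:ℝ) := by nlinarith
  have hrmn : r ≤ m := by exact_mod_cast hrm
  have hup := up m r h2r
  have hkey := key m r
  have hbr : (0:ℝ) < (Nat.choose m r : ℝ) := by exact_mod_cast Nat.choose_pos hrmn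
  have hS0 : (0:ℝ) ≤ S m r := by linarith [one_le_S m r]
  -- strict scalar: (ω-1)(m-r+1)(r+1) < (m-r)(m-2r+1)
  have hK : (0:ℝ) ≤ (m:ℝ) + 2 - (ω+1)*((r:ℝ)+2) := by linarith
  have hsc : (ω-1)*((m:ℝ)-r+1)*((r:ℝ)+1) < ((m:ℝ)-r)*((m:ℝ)-2*r+1) := by
    nlinarith [mul_nonneg hK hK, mul_nonneg hK (show (0:ℝ) ≤ ω*r + 3*ω + 2 by nlinarith),
      mul_nonneg (mul_nonneg (show (0:ℝ) ≤ ω by linarith) (show (0:ℝ) ≤ ω by linarith)) hr0,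
      mul_nonneg (show (0:ℝ) ≤ ω by linarith) hr0, sq_nonneg ω]
  have ht1 := mul_le_mul_of_nonneg_left hup (show (0:ℝ) ≤ (ω-1)*((r:ℝ)+1) by
    have : (0:ℝ) ≤ ω - 1 := by linarith
    positivity)
  have ht2 := mul_lt_mul_of_pos_right hsc hbr
  have hk3 : ((m:ℝ)-2*r+1) * (((m:ℝ)-r) * (Nat.choose m r : ℝ))
      = ((m:ℝ)-2*r+1) * (((r:ℝ)+1) * (Nat.choose m (r+1) : ℝ)) := by rw [hkey]
  have hpos : (0:ℝ) < ((m:ℝ)-2*r+1)*((r:ℝ)+1) := by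
    have h1 : (0:ℝ) < (m:ℝ)-2*r+1 := by linarith
    positivity
  nlinarith [ht1, ht2, hk3, hpos, hS0]

/-- Non-strict ascending inequality. -/
lemma asc_le (ω : ℝ) (hω17 : 1.7 ≤ ω) (m r : ℕ)
    (h : (ω + 1) * ((r : ℝ) + 1) ≤ (m : ℝ) + 2) :
    (ω - 1) * S m r ≤ (Nat.choose m (r + 1) : ℝ) := by
  have hr0 : (0 : ℝ) ≤ (r : ℝ) := Nat.cast_nonneg _
  have hwr : (0:ℝ) ≤ (ω - 1.7) * r := mul_nonneg (by linarith) hr0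
  have h2r : 2 * (r:ℝ) ≤ (m:ℝ) := by nlinarith
  have hrm : (r:ℝ) ≤ (m:ℝ) := by nlinarith
  have hrmn : r ≤ m := by exact_mod_cast hrm
  have hup := up m r h2r
  have hkey := key m r
  have hbr : (0:ℝ) < (Nat.choose m r : ℝ) := by exact_mod_cast Nat.choose_pos hrmn
  have hS0 : (0:ℝ) ≤ S m r := by linarith [one_le_S m r]
  have hK : (0:ℝ) ≤ (m:ℝ) + 2 - (ω+1)*((r:ℝ)+1) := by linarith
  have hsc : (ω-1)*((m:ℝ)-r+1)*((r:ℝ)+1) ≤ ((m:ℝ)-r)*((m:ℝ)-2*r+1) := by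
    nlinarith [mul_nonneg hK hK, mul_nonneg hK (show (0:ℝ) ≤ ω*((r:ℝ)+1) by positivity ), hr0]
  have ht1 := mul_le_mul_of_nonneg_left hup (show (0:ℝ) ≤ (ω-1)*((r:ℝ)+1) by
    have : (0:ℝ) ≤ ω - 1 := by linarith
    positivity)
  have ht2 := mul_le_mul_of_nonneg_right hsc (le_of_lt hbr)
  have hk3 : ((m:ℝ)-2*r+1) * (((m:ℝ)-r) * (Nat.choose m r : ℝ))
      = ((m:ℝ)-2*r+1) * (((r:ℝ)+1) * (Nat.choose m (r+1) : ℝ)) := by rw [hkey]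
  have hpos : (0:ℝ) < ((m:ℝ)-2*r+1)*((r:ℝ)+1) := by
    have h1 : (0:ℝ) < (m:ℝ)-2*r+1 := by linarith
    positivity
  nlinarith [ht1, ht2, hk3, hpos, hS0]

/-- Descending inequality for all r ≥ r'+1 with r < m. -/
lemma desc (ω : ℝ) (hω17 : 1.7 ≤ ω) (hω2 : 3 ≤ ω ^ 2) (m r' : ℕ)
    (hlo : (ω + 1) * (r' : ℝ) ≤ (m : ℝ) + 2)
    (hhi : (m : ℝ) + 2 < (ω + 1) * ((r' : ℝ) + 1)) :
    ∀ r : ℕ, r' + 1 ≤ r → r < m → (Nat.choose m (r + 1) : ℝ) < (ω - 1) * S m r := by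
  intro r hr
  induction r, hr using Nat.le_induction with
  | base =>
    intro hlt
    -- base case at rc = r' + 1
    have hmrc : ((r':ℝ) + 1) + 1 ≤ (m:ℝ) := by exact_mod_cast Nat.succ_le_of_lt hlt
    have hrc0 : (0:ℝ) ≤ (r':ℝ) := Nat.cast_nonneg _
    have hH1 : (ω + 1) * (((r' + 1 : ℕ)) : ℝ) ≤ (m : ℝ) + 2 + (ω + 1) := by
      push_cast
      nlinarith
    have hH2 : 2 * (((r' + 1 : ℕ)) : ℝ) ≤ (m : ℝ) + ω + 1 := by
      push_cast
      by_cases hc : r' ≤ 2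
      · have : (r' : ℝ) ≤ 2 := by exact_mod_cast hc
        linarith
      · have h3 : (3:ℝ) ≤ (r' : ℝ) := by exact_mod_cast Nat.succ_le_of_lt (Nat.lt_of_not_le hc)
        have := mul_le_mul_of_nonneg_left h3 (show (0:ℝ) ≤ ω - 1 by linarith)
        linarith
    have hinv := low ω hω17 hω2 m (r' + 1) hH1 hH2
    have hkey := key m (r' + 1)
    push_cast at hinv hkey
    have hS1 : (1:ℝ) ≤ S m (r' + 1) := one_le_S m (r' + 1)
    have h5 : (m:ℝ) - 2*((r':ℝ)+1) + ω + 1 < (ω - 1) * (((r':ℝ)+1) + 1) := by nlinarith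
    have t1 : (((r':ℝ)+1)+1) * (Nat.choose m (r'+1+1) : ℝ)
        ≤ ((m:ℝ) - 2*((r':ℝ)+1) + ω + 1) * S m (r'+1) := by linarith
    have t2 := mul_lt_mul_of_pos_right h5 (show (0:ℝ) < S m (r'+1) by linarith)
    have h6 : (((r':ℝ)+1)+1) * (Nat.choose m (r'+1+1) : ℝ)
        < (((r':ℝ)+1)+1) * ((ω - 1) * S m (r'+1)) := by nlinarith
    have hp : (0:ℝ) < ((r':ℝ)+1)+1 := by positivity
    exact lt_of_mul_lt_mul_left h6 (le_of_lt hp)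
  | succ n hn ih =>
    intro hlt
    have hnm : n < m := by omega
    have hbn := ih hnm
    have hb1 : (0:ℝ) ≤ (Nat.choose m (n+1) : ℝ) := Nat.cast_nonneg _
    have hn0 : (0:ℝ) ≤ (n:ℝ) := Nat.cast_nonneg _
    -- (ω+1) n ≥ (ω+1)(r'+1) > m+2
    have hcast : ((r':ℝ) + 1) ≤ (n:ℝ) := by exact_mod_cast hn
    have hmn : (m:ℝ) + 2 < (ω + 1) * (n:ℝ) := by
      have := mul_le_mul_of_nonneg_left hcast (show (0:ℝ) ≤ ω + 1 by linarith)
      linarith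
    have hkey := key m (n + 1)
    push_cast at hkey
    have hcoef : (m:ℝ) - ((n:ℝ)+1) ≤ ω * (((n:ℝ)+1) + 1) := by nlinarith
    have hstep : (Nat.choose m (n+1+1) : ℝ) ≤ ω * (Nat.choose m (n+1) : ℝ) := by
      have h7 : (((n:ℝ)+1)+1) * (Nat.choose m (n+1+1) : ℝ)
          ≤ (((n:ℝ)+1)+1) * (ω * (Nat.choose m (n+1) : ℝ)) := by nlinarith
      exact le_of_mul_le_mul_left h7 (by positivity)
    rw [S_succ]
    nlinarith [hbn, hstep, hb1]

end Stmt11Aux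

open Stmt11Aux in
theorem stmt_11 (ω : ℝ) (hω : Real.sqrt 3 ≤ ω) (m : ℕ)
    (g : ℕ → ℝ)
    (hg : ∀ r, g r = (ω ^ r)⁻¹ * ∑ i ∈ Finset.range (r + 1), (Nat.choose m i : ℝ))
    (r' : ℕ) (hr' : r' = ⌊((m : ℝ) + 2) / (ω + 1)⌋₊) :
    (∀ r, r + 2 ≤ r' → g r < g (r + 1)) ∧
    (1 ≤ r' → g (r' - 1) ≤ g r') ∧
    (∀ r, r' + 1 ≤ r → r < m → g r > g (r + 1)) ∧
    (∀ r₀ ≤ m, (∀ r ≤ m, g r ≤ g r₀) → (∀ r ≤ m, g r = g r₀ → r ≤ r₀) →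
      r₀ = r' ∨ r₀ = r' + 1) := by
  have h3 : Real.sqrt 3 ^ 2 = 3 := Real.sq_sqrt (by norm_num)
  have h0 : (0:ℝ) ≤ Real.sqrt 3 := Real.sqrt_nonneg 3
  have hω17 : (1.7:ℝ) ≤ ω := by nlinarith
  have hω2 : (3:ℝ) ≤ ω ^ 2 := by nlinarith
  have hω0 : (0:ℝ) < ω := by linarith
  have hω1pos : (0:ℝ) < ω + 1 := by linarith
  -- floor bounds
  have hdivnn : (0:ℝ) ≤ ((m:ℝ) + 2) / (ω + 1) := by positivity
  have hlo : (ω + 1) * (r' : ℝ) ≤ (m : ℝ) + 2 := by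
    have := Nat.floor_le hdivnn
    rw [← hr'] at this
    calc (ω + 1) * (r' : ℝ) ≤ (ω + 1) * (((m:ℝ)+2)/(ω+1)) := by
          exact mul_le_mul_of_nonneg_left this (le_of_lt hω1pos)
      _ = (m:ℝ) + 2 := by field_simp
  have hhi : (m : ℝ) + 2 < (ω + 1) * ((r' : ℝ) + 1) := by
    have := Nat.lt_floor_add_one (((m:ℝ)+2)/(ω+1))
    rw [← hr'] at this
    have h2 := (div_lt_iff₀ hω1pos).mp this
    linarith
  -- difference formula
  have hdiff : ∀ r : ℕ, g (r + 1) - g r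
      = (ω ^ (r+1))⁻¹ * ((Nat.choose m (r+1) : ℝ) - (ω - 1) * S m r) := by
    intro r
    have e1 : g (r+1) = (ω ^ (r+1))⁻¹ * (S m r + (Nat.choose m (r+1) : ℝ)) := by
      rw [hg (r+1), ← S_succ]
      rfl
    have e2 : g r = (ω ^ r)⁻¹ * S m r := hg r
    rw [e1, e2]
    have hpow : (0:ℝ) < ω ^ r := pow_pos hω0 r
    have hpne : (ω:ℝ) ^ r ≠ 0 := ne_of_gt hpow
    have hωne : (ω:ℝ) ≠ 0 := ne_of_gt hω0
    field_simp [pow_succ]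
    ring
  have hr'le_m : r' ≤ m := by
    by_contra hcon
    have h1 : (m:ℕ) + 1 ≤ r' := by omega
    have h2 : ((m:ℝ) + 1) ≤ (r' : ℝ) := by exact_mod_cast h1
    have h3' := mul_le_mul_of_nonneg_left h2 (le_of_lt hω1pos)
    have hm0 : (0:ℝ) ≤ (m:ℝ) := Nat.cast_nonneg _
    nlinarith [mul_nonneg (show (0:ℝ) ≤ ω - 1.7 by linarith) hm0]
  -- Part 1
  have part1 : ∀ r, r + 2 ≤ r' → g r < g (r + 1) := by
    intro r hrr
    have hc : (ω + 1) * ((r:ℝ) + 2) ≤ (m:ℝ) + 2 := by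
      have h1 : ((r:ℝ) + 2) ≤ (r' : ℝ) := by exact_mod_cast hrr
      calc (ω + 1) * ((r:ℝ) + 2) ≤ (ω + 1) * (r' : ℝ) :=
            mul_le_mul_of_nonneg_left h1 (le_of_lt hω1pos)
        _ ≤ (m:ℝ) + 2 := hlo
    have hkey := asc_strict ω hω17 m r hc
    have hd := hdiff r
    have hp : (0:ℝ) < (ω ^ (r+1))⁻¹ := by positivity
    nlinarith [mul_pos hp (show (0:ℝ) < (Nat.choose m (r+1) : ℝ) - (ω - 1) * S m r by linarith)]
  -- Part 2
  have part2 : 1 ≤ r' → g (r' - 1) ≤ g r' := by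
    intro hr'1
    have hh : r' - 1 + 1 = r' := Nat.succ_pred_eq_of_pos hr'1
    have hcast : (((r' - 1 : ℕ)):ℝ) + 1 = (r' : ℝ) := by
      have := congrArg (Nat.cast : ℕ → ℝ) hh
      push_cast at this
      linarith
    have hc : (ω + 1) * ((((r' - 1 : ℕ)):ℝ) + 1) ≤ (m:ℝ) + 2 := by rw [hcast]; exact hlo
    have hkey := asc_le ω hω17 m (r' - 1) hc
    rw [hh] at hkey
    have hd := hdiff (r' - 1)
    rw [hh] at hd
    have hp : (0:ℝ) ≤ (ω ^ r')⁻¹ := by positivity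
    nlinarith [mul_nonneg hp (show (0:ℝ) ≤ (Nat.choose m r' : ℝ)
      - (ω - 1) * S m (r' - 1) by linarith)]
  -- Part 3
  have part3 : ∀ r, r' + 1 ≤ r → r < m → g r > g (r + 1) := by
    intro r h1 h2
    have hkey := desc ω hω17 hω2 m r' hlo hhi r h1 h2
    have hd := hdiff r
    have hp : (0:ℝ) < (ω ^ (r+1))⁻¹ := by positivity
    nlinarith [mul_pos hp (show (0:ℝ) < (ω - 1) * S m r - (Nat.choose m (r+1) : ℝ) by linarith)]
  refine ⟨part1, part2, part3, ?_⟩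
  intro r₀ hr₀m hmax htie
  by_contra hne
  push_neg at hne
  obtain ⟨hne1, hne2⟩ := hne
  rcases (show r₀ + 2 ≤ r' ∨ r₀ + 1 = r' ∨ r' + 2 ≤ r₀ by omega) with hA | hA | hA
  · -- r₀ + 2 ≤ r' : ascending contradiction
    have hg1 := part1 r₀ hA
    have hle : r₀ + 1 ≤ m := by omega
    have := hmax (r₀ + 1) hle
    linarith
  · -- r₀ = r' - 1
    have hr'1 : 1 ≤ r' := by omega
    have hg2 := part2 hr'1
    have heq : r' - 1 = r₀ := by omega
    rw [heq] at hg2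
    have hmax' := hmax r' hr'le_m
    have heqg : g r' = g r₀ := le_antisymm hmax' hg2
    have := htie r' hr'le_m heqg
    omega
  · -- r' + 2 ≤ r₀ : descending contradiction
    have h1 : r' + 1 ≤ r₀ - 1 := by omega
    have h2 : r₀ - 1 < m := by omega
    have hg3 := part3 (r₀ - 1) h1 h2
    have hh : r₀ - 1 + 1 = r₀ := by omega
    rw [hh] at hg3
    have := hmax (r₀ - 1) (by omega)
    linarith
end

section
/- Let ω > 1 be real, m ≥ 0 an integer, g(r) = ω^{-r}·s_m(r) with s_m(r) = ∑_{i=0}^{r} C(m,i), and let r_0 ∈ {0,...,m} be the largest maximizing input of g. Then (1/((ω-1)·ω^{r_0})) · C(m, r_0+1) < g(r_0) ≤ (1/((ω-1)·ω^{r_0-1})) · C(m, r_0). -/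
theorem stmt_14 (ω : ℝ) (hω : 1 < ω) (m : ℕ)
    (g : ℕ → ℝ)
    (hg : ∀ r, g r = (ω ^ r)⁻¹ * ∑ i ∈ Finset.range (r + 1), (Nat.choose m i : ℝ))
    (r₀ : ℕ) (hr₀ : r₀ ≤ m)
    (hmax : ∀ r ≤ m, g r ≤ g r₀)
    (hlargest : ∀ r ≤ m, g r = g r₀ → r ≤ r₀) :
    1 / ((ω - 1) * ω ^ (r₀ : ℤ)) * Nat.choose m (r₀ + 1) < g r₀ ∧
    g r₀ ≤ 1 / ((ω - 1) * ω ^ ((r₀ : ℤ) - 1)) * Nat.choose m r₀ := by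
  have hω0 : (0:ℝ) < ω := lt_trans one_pos hω
  have hω1 : (0:ℝ) < ω - 1 := by linarith
  set S : ℝ := ∑ i ∈ Finset.range (r₀ + 1), (Nat.choose m i : ℝ) with hS
  have hpow : (0:ℝ) < ω ^ r₀ := pow_pos hω0 r₀
  have hS1 : (1:ℝ) ≤ S := by
    rw [hS]
    calc (1:ℝ) = (Nat.choose m 0 : ℝ) := by simp
    _ ≤ _ := Finset.single_le_sum (f := fun i => (Nat.choose m i : ℝ))
        (fun i _ => by positivity) (by simp)
  -- claim 1 : C(m, r₀+1) < (ω-1) * S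
  have claim1 : (Nat.choose m (r₀+1) : ℝ) < (ω - 1) * S := by
    rcases eq_or_lt_of_le hr₀ with heq | hlt
    · rw [heq, Nat.choose_succ_self]
      push_cast
      nlinarith
    · have h1 : g (r₀+1) ≤ g r₀ := hmax (r₀+1) hlt
      have h2 : g (r₀+1) ≠ g r₀ := by
        intro h
        have := hlargest (r₀+1) hlt h
        omega
      have h3 : g (r₀+1) < g r₀ := lt_of_le_of_ne h1 h2
      rw [hg, hg] at h3
      rw [Finset.sum_range_succ (n := r₀+1)] at h3
      rw [← hS] at h3
      rw [pow_succ, mul_inv] at h3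
      set C : ℝ := (Nat.choose m (r₀+1) : ℝ)
      have e1 : (ω ^ r₀)⁻¹ * ω⁻¹ * (S + C) * (ω ^ r₀ * ω) = S + C := by
        field_simp
      have e2 : (ω ^ r₀)⁻¹ * S * (ω ^ r₀ * ω) = ω * S := by
        field_simp
      have h5 := mul_lt_mul_of_pos_right h3 (show (0:ℝ) < ω ^ r₀ * ω by positivity)
      rw [e1, e2] at h5
      linarith
  -- claim 2 : (ω-1) * S ≤ ω * C(m, r₀)
  have claim2 : (ω - 1) * S ≤ ω * (Nat.choose m r₀ : ℝ) := by
    rcases Nat.eq_zero_or_pos r₀ with h0 | hpos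
    · subst h0
      have hSe : S = 1 := by rw [hS]; simp
      rw [hSe]
      simp only [Nat.choose_zero_right, Nat.cast_one]
      linarith
    · obtain ⟨k, rfl⟩ : ∃ k, r₀ = k + 1 := ⟨r₀ - 1, by omega⟩
      have h1 : g k ≤ g (k+1) := hmax k (by omega)
      rw [hg, hg] at h1
      rw [Finset.sum_range_succ (n := k+1)] at h1
      rw [pow_succ, mul_inv] at h1
      set T : ℝ := ∑ i ∈ Finset.range (k + 1), (Nat.choose m i : ℝ) with hT
      set C : ℝ := (Nat.choose m (k+1) : ℝ)
      have hST : S = T + C := by rw [hS, Finset.sum_range_succ]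
      have e1 : (ω ^ k)⁻¹ * T * (ω ^ k * ω) = ω * T := by
        have : (0:ℝ) < ω ^ k := pow_pos hω0 k
        field_simp
      have e2 : (ω ^ k)⁻¹ * ω⁻¹ * (T + C) * (ω ^ k * ω) = T + C := by
        have : (0:ℝ) < ω ^ k := pow_pos hω0 k
        field_simp
      have h5 := mul_le_mul_of_nonneg_right h1 (le_of_lt (show (0:ℝ) < ω ^ k * ω by positivity))
      rw [e1, e2] at h5
      nlinarith [h5, hST]
  constructor
  · rw [hg, ← hS, zpow_natCast]
    rw [div_mul_eq_mul_div, one_mul, div_lt_iff₀ (by positivity)]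
    calc (Nat.choose m (r₀+1) : ℝ) < (ω - 1) * S := claim1
    _ = (ω ^ r₀)⁻¹ * S * ((ω - 1) * ω ^ r₀) := by
      field_simp
  · rw [hg, ← hS]
    have hz : ω ^ ((r₀:ℤ) - 1) = ω ^ r₀ * ω⁻¹ := by
      rw [zpow_sub₀ (ne_of_gt hω0), zpow_natCast, zpow_one, div_eq_mul_inv]
    rw [hz, div_mul_eq_mul_div, one_mul, le_div_iff₀ (by positivity)]
    have : (ω ^ r₀)⁻¹ * S * ((ω - 1) * (ω ^ r₀ * ω⁻¹)) = (ω - 1) * S * ω⁻¹ := by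
      field_simp
    rw [this]
    rw [← div_eq_mul_inv, div_le_iff₀ hω0]
    nlinarith [claim2]
end
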